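/- arXiv:1706.06269 — 8 statements merged into one kernel-verified Lean document; each statement's English description precedes it below -/
import Mathlib

section
/- Let p be a prime, let s, n, m be positive integers with gcd(n, p) = 1, let F be the finite field with p^m elements, let η be a nonzero element of F, and let η₀ ∈ F satisfy η₀^{p^s} = η (such η₀ exists). Suppose x^n − η₀ is irreducible over F. Then every ideal C of F[x]/⟨x^{np^s} − η⟩ equals ⟨(x^n − η₀)^υ⟩ for exactly one integer υ with 0 ≤ υ ≤ p^s, and the Hamming distance of C = ⟨(x^n − η₀)^υ⟩ is: 1 if υ = 0; ℓ + 2 if ℓp^{s−1} + 1 ≤ υ ≤ (ℓ+1)p^{s−1} for some 0 ≤ ℓ ≤ p − 2; (i+1)p^k if p^s − p^{s−k} + (i−1)p^{s−k−1} + 1 ≤ υ ≤ p^s − p^{s−k} + i·p^{s−k−1} for some 1 ≤ i ≤ p − 1 and 1 ≤ k ≤ s − 1; and 0 if υ = p^s. -/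
open Polynomial

/-- The unique representative of degree `< deg q` of an element of `A[x]/⟨q⟩`
(for `q` monic). -/
noncomputable def polyRep {A : Type} [CommRing A] (q : A[X]) (c : A[X] ⧸ Ideal.span {q}) :
    A[X] :=
  Function.surjInv Ideal.Quotient.mk_surjective c %ₘ q

/-- Hamming weight of a codeword: the number of nonzero coefficients of its
representative of degree `< deg q`. -/
noncomputable def wH {A : Type} [CommRing A] (q : A[X]) (c : A[X] ⧸ Ideal.span {q}) : ℕ :=
  (polyRep q c).support.card

/-- Hamming distance of a code (an ideal of `A[x]/⟨q⟩`): the minimum Hamming weight of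
a nonzero codeword, `0` for the zero code (`sInf ∅ = 0` in `ℕ`). -/
noncomputable def dH {A : Type} [CommRing A] (q : A[X])
    (I : Ideal (A[X] ⧸ Ideal.span {q})) : ℕ :=
  sInf {w : ℕ | ∃ c ∈ I, c ≠ 0 ∧ w = wH q c}

/-!
Write `f = Xⁿ - η₀`; then `X^{np^s} - η = f^{p^s}`, so the ideals are the `⟨f^υ⟩`, and the
codewords of `⟨f^υ⟩` are the nonzero multiples of `f^υ` of degree `< np^s`.

The lower bound on their weights goes by induction on `s`. Put `M = np^{s-1}` and
`b = η₀^{p^{s-1}}`, so that `f^{p^{s-1}} = X^M - b`, and read a polynomial `c` of degree `< pM`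
as `M` columns `cᵢ(Y) = ∑ₖ c_{Mk+i} Yᵏ`, each of degree `< p`. If `f^t ∣ c` with
`t = ℓp^{s-1} + r`, then `c = (X^M - b)^ℓ g` with `f^r ∣ g`; every column of `c` is `(Y - b)^ℓ`
times the corresponding column `gᵢ` of `g`, and `g mod (X^M - b) = ∑ gᵢ(b) Xⁱ` is again divisible
by `f^r`. A nonzero polynomial of degree `< p` divisible by `(Y - b)^ℓ` has more than `ℓ` terms,
so the weight of `c` is at least `ℓ + 1` times the weight of `g mod (X^M - b)`, and at least
`ℓ + 2` if that remainder vanishes; induction applies to the remainder.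

The bound is attained by `f^u` at the right end `u` of each interval: since the weight of
`h · P(X^M)` is `wt h · wt P` when `deg h < M`, the weight of `(X - β)^u` is the product of
`dᵢ + 1` over the base-`p` digits `dᵢ` of `u`.
-/

open Finset

namespace Polynomial

section Column

variable {R : Type*} [CommSemiring R] {M : ℕ}

-- Meaningful only for `0 < M`.
noncomputable def column (M i : ℕ) (g : R[X]) : R[X] :=
  ∑ k ∈ range (g.natDegree + 1), monomial k (g.coeff (M * k + i))

theorem coeff_column (hM : 0 < M) (i : ℕ) (g : R[X]) (k : ℕ) :
    (column M i g).coeff k = g.coeff (M * k + i) := by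
  rw [column, finsetSum_coeff]
  simp only [coeff_monomial, sum_ite_eq', mem_range]
  split_ifs with hk
  · rfl
  · refine (coeff_eq_zero_of_natDegree_lt ?_).symm
    nlinarith

theorem coeff_column_mod_div (hM : 0 < M) (g : R[X]) (t : ℕ) :
    (column M (t % M) g).coeff (t / M) = g.coeff t := by
  rw [coeff_column hM, Nat.div_add_mod]

theorem column_add (hM : 0 < M) (i : ℕ) (g g' : R[X]) :
    column M i (g + g') = column M i g + column M i g' := by
  ext k
  simp only [coeff_add, coeff_column hM]

theorem column_expand_mul (hM : 0 < M) {i : ℕ} (hi : i < M) (q g : R[X]) :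
    column M i (expand R M q * g) = q * column M i g := by
  induction q using Polynomial.induction_on' with
  | add q q' hq hq' => rw [map_add, add_mul, column_add hM, hq, hq', add_mul]
  | monomial j a =>
    ext k
    rw [expand_monomial, coeff_column hM, ← C_mul_X_pow_eq_monomial, ← C_mul_X_pow_eq_monomial,
      mul_assoc, mul_assoc, coeff_C_mul, coeff_C_mul, coeff_X_pow_mul', coeff_X_pow_mul']
    by_cases hjk : j ≤ k
    · obtain ⟨d, rfl⟩ := Nat.exists_eq_add_of_le hjk
      rw [if_pos (by nlinarith), if_pos le_self_add, coeff_column hM]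
      congr 2
      rw [Nat.add_sub_cancel_left]
      ring_nf
      omega
    · rw [if_neg (by nlinarith), if_neg hjk]

theorem column_of_natDegree_lt (hM : 0 < M) (i : ℕ) {h : R[X]} (hh : h.natDegree < M) :
    column M i h = C (h.coeff i) := by
  ext k
  rw [coeff_column hM, coeff_C]
  rcases k with _ | k
  · simp
  · rw [coeff_eq_zero_of_natDegree_lt (by nlinarith), if_neg k.succ_ne_zero]

theorem natDegree_column_lt (hM : 0 < M) (i : ℕ) {g : R[X]} {N : ℕ}
    (hg : g.natDegree < M * N) : (column M i g).natDegree < N := by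
  have hN : 0 < N := Nat.pos_of_mul_pos_left (Nat.zero_lt_of_lt hg)
  rw [Nat.lt_iff_le_pred hN, natDegree_le_iff_coeff_eq_zero]
  intro k hk
  rw [coeff_column hM]
  exact coeff_eq_zero_of_natDegree_lt (by nlinarith [Nat.sub_one_add_one hN.ne'])

theorem sum_X_pow_mul_expand_column (hM : 0 < M) (g : R[X]) :
    ∑ i ∈ range M, X ^ i * expand R M (column M i g) = g := by
  ext t
  simp_rw [finsetSum_coeff, coeff_X_pow_mul', coeff_expand hM]
  rw [sum_eq_single (t % M)]
  · have hdiv : (t - t % M) / M = t / M := by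
      rw [show t - t % M = M * (t / M) by have := Nat.div_add_mod t M; omega,
        Nat.mul_div_cancel_left _ hM]
    rw [if_pos (Nat.mod_le t M), if_pos (Nat.dvd_sub_mod t), coeff_column hM, hdiv,
      Nat.div_add_mod]
  · intro i hi hne
    split_ifs with hit hdvd
    · obtain ⟨k, hk⟩ := hdvd
      rw [show t = M * k + i by omega, Nat.mul_add_mod, Nat.mod_eq_of_lt (mem_range.1 hi)] at hne
      exact absurd rfl hne
    all_goals rfl
  · exact fun h => absurd (mem_range.2 (Nat.mod_lt t hM)) h

theorem card_support_eq_sum_column (hM : 0 < M) (g : R[X]) :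
    #g.support = ∑ i ∈ range M, #(column M i g).support := by
  rw [card_eq_sum_card_fiberwise (f := (· % M)) (t := range M)
    (fun t _ => mem_range.2 (Nat.mod_lt t hM))]
  refine sum_congr rfl fun i hi => card_nbij' (· / M) (M * · + i) ?_ ?_ ?_ ?_
  · rintro t ht
    obtain ⟨htg, rfl⟩ := mem_filter.1 ht
    rw [mem_coe, mem_support_iff, coeff_column_mod_div hM]
    exact mem_support_iff.1 htg
  · intro k hk
    rw [mem_coe, mem_support_iff, coeff_column hM] at hk
    refine mem_filter.2 ⟨mem_support_iff.2 hk, ?_⟩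
    rw [Nat.mul_add_mod, Nat.mod_eq_of_lt (mem_range.1 hi)]
  · rintro t ht
    obtain ⟨-, rfl⟩ := mem_filter.1 ht
    exact Nat.div_add_mod t M
  · intro k _
    simp only
    rw [Nat.mul_add_div hM, Nat.div_eq_of_lt (mem_range.1 hi), add_zero]

theorem exists_column_ne_zero (hM : 0 < M) {g : R[X]} (hg : g ≠ 0) :
    ∃ i < M, column M i g ≠ 0 := by
  by_contra! h
  refine hg (ext fun t => ?_)
  rw [← coeff_column_mod_div hM, h _ (Nat.mod_lt t hM), coeff_zero, coeff_zero]

theorem card_support_mul_expand [NoZeroDivisors R] (hM : 0 < M) {h : R[X]}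
    (hh : h.natDegree < M) (P : R[X]) :
    #(h * expand R M P).support = #h.support * #P.support := by
  classical
  have hcol (i : ℕ) (hi : i ∈ range M) : #(column M i (h * expand R M P)).support =
      if h.coeff i = 0 then 0 else #P.support := by
    rw [mul_comm, column_expand_mul hM (mem_range.1 hi), column_of_natDegree_lt hM i hh]
    split_ifs with h0
    · simp [h0]
    · congr 1
      ext k
      simp [coeff_mul_C, h0]
  rw [card_support_eq_sum_column hM, sum_congr rfl hcol, sum_ite, sum_const_zero, zero_add,
    sum_const, smul_eq_mul]
  congr 2
  ext i
  simp only [mem_filter, mem_range, mem_support_iff]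
  exact ⟨fun hi => hi.2, fun hi => ⟨(le_natDegree_of_ne_zero hi).trans_lt hh, hi⟩⟩

end Column

section Remainder

variable {R : Type*} [CommRing R] [Nontrivial R] {M : ℕ}

theorem coeff_modByMonic_expand_X_sub_C (hM : 0 < M) (g : R[X]) (b : R) {i : ℕ} (hi : i < M) :
    (g %ₘ expand R M (X - C b)).coeff i = (column M i g).eval b := by
  set r := ∑ j ∈ range M, C ((column M j g).eval b) * X ^ j
  have hcoeff (m : ℕ) : r.coeff m = if m < M then (column M m g).eval b else 0 := by
    simp [r, finsetSum_coeff]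
  have hmonic : (expand R M (X - C b)).Monic := (monic_expand_iff hM).2 (monic_X_sub_C b)
  have hdvd : expand R M (X - C b) ∣ g - r := by
    nth_rewrite 1 [← sum_X_pow_mul_expand_column hM g]
    rw [← sum_sub_distrib]
    refine dvd_sum fun j _ => ?_
    rw [show X ^ j * expand R M (column M j g) - C ((column M j g).eval b) * X ^ j =
        X ^ j * expand R M (column M j g - C ((column M j g).eval b)) by
      rw [map_sub, expand_C, mul_sub, mul_comm (C _)]]
    exact dvd_mul_of_dvd_right (_root_.map_dvd (expand R M) X_sub_C_dvd_sub_C_eval) _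
  have hdeg : r.degree < (expand R M (X - C b)).degree := by
    rw [degree_eq_natDegree hmonic.ne_zero, natDegree_expand, natDegree_X_sub_C, one_mul,
      degree_lt_iff_coeff_zero]
    intro m hm
    rw [hcoeff, if_neg (by exact_mod_cast not_lt.2 hm)]
  rw [modByMonic_eq_of_dvd_sub hmonic hdvd, (modByMonic_eq_self_iff hmonic).2 hdeg, hcoeff,
    if_pos hi]

theorem natDegree_modByMonic_expand_X_sub_C_lt (hM : 0 < M) (g : R[X]) (b : R) :
    (g %ₘ expand R M (X - C b)).natDegree < M := by
  have hmonic : (expand R M (X - C b)).Monic := (monic_expand_iff hM).2 (monic_X_sub_C b)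
  have hdeg : (expand R M (X - C b)).natDegree = M := by
    rw [natDegree_expand, natDegree_X_sub_C, one_mul]
  have hne : expand R M (X - C b) ≠ 1 := fun h => by
    rw [h, natDegree_one] at hdeg
    omega
  exact (natDegree_modByMonic_lt g hmonic hne).trans_eq hdeg

end Remainder

theorem card_support_one {R : Type*} [Semiring R] [Nontrivial R] : #(1 : R[X]).support = 1 := by
  rw [← C_1, support_C one_ne_zero, card_singleton]

theorem card_support_X_pow_mul {R : Type*} [Semiring R] (q : R[X]) (e : ℕ) :
    #(X ^ e * q).support = #q.support := by
  have : (X ^ e * q).support = q.support.map (addRightEmbedding e) := by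
    ext t
    simp only [mem_support_iff, coeff_X_pow_mul', mem_map, addRightEmbedding_apply]
    constructor
    · intro ht
      split_ifs at ht with h
      · exact ⟨t - e, ht, Nat.sub_add_cancel h⟩
      · exact absurd rfl ht
    · rintro ⟨u, hu, rfl⟩
      rwa [if_pos (Nat.le_add_left e u), Nat.add_sub_cancel]
  rw [this, card_map]

theorem card_support_derivative_lt {R : Type*} [Semiring R] {q : R[X]} (hq : q.coeff 0 ≠ 0) :
    #(derivative q).support < #q.support := by
  have hsub : (derivative q).support ⊆ (q.support.erase 0).image (· - 1) := by
    intro t ht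
    rw [mem_support_iff, coeff_derivative] at ht
    refine mem_image.2 ⟨t + 1, mem_erase.2 ⟨t.succ_ne_zero, ?_⟩, rfl⟩
    exact mem_support_iff.2 (left_ne_zero_of_mul ht)
  calc #(derivative q).support ≤ #((q.support.erase 0).image (· - 1)) := card_le_card hsub
    _ ≤ #(q.support.erase 0) := card_image_le
    _ < #q.support := card_erase_lt_of_mem (mem_support_iff.2 hq)

theorem lt_of_expand_X_sub_C_pow_dvd {R : Type*} [CommRing R] [IsDomain R] {M N k : ℕ} {b : R}
    {c : R[X]} (hc0 : c ≠ 0) (hc : c.natDegree < M * N) (hdvd : expand R M ((X - C b) ^ k) ∣ c) :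
    k < N := by
  have := natDegree_le_of_dvd hdvd hc0
  rw [natDegree_expand, natDegree_pow, natDegree_X_sub_C, mul_one] at this
  exact Nat.lt_of_mul_lt_mul_right (this.trans_lt (mul_comm M N ▸ hc))

variable {F : Type*} [Field F] {p : ℕ} [CharP F p] {b : F} {M : ℕ}

theorem derivative_ne_zero_of_natDegree_lt {q : F[X]} (hq : q.natDegree ≠ 0)
    (hqp : q.natDegree < p) : derivative q ≠ 0 := by
  intro h
  have hexp := congrArg natDegree (expand_contract p h (Nat.ne_zero_of_lt hqp))
  rw [natDegree_expand] at hexp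
  have : (contract p q).natDegree = 0 := by
    by_contra h0
    have := Nat.le_mul_of_pos_left p (Nat.pos_of_ne_zero h0)
    omega
  rw [this, zero_mul] at hexp
  exact hq hexp.symm

-- Strip the power of `X` (prime to `X - b`), then differentiate: this lowers the multiplicity of
-- `b` by one and the weight by at least one.
theorem lt_card_support_of_X_sub_C_pow_dvd (hb : b ≠ 0) {m : ℕ} {χ : F[X]} (hχ : χ ≠ 0)
    (hdeg : χ.natDegree < p) (hdvd : (X - C b) ^ m ∣ χ) : m < #χ.support := by
  induction m generalizing χ with
  | zero => exact card_pos.2 (support_nonempty.2 hχ)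
  | succ m ih =>
    obtain ⟨χ₁, hχeq, hX⟩ := exists_eq_pow_rootMultiplicity_mul_and_not_dvd χ hχ 0
    rw [map_zero, sub_zero] at hχeq hX
    have hχ₁ : χ₁ ≠ 0 := by
      rintro rfl
      exact hX (dvd_zero X)
    have hcop : IsCoprime ((X - C b) ^ (m + 1)) (X ^ rootMultiplicity 0 χ) := by
      simpa using (isCoprime_X_sub_C_of_isUnit_sub (a := b) (b := 0) (by simpa using hb)).pow
    have hdvd₁ : (X - C b) ^ (m + 1) ∣ χ₁ := hcop.dvd_of_dvd_mul_left (hχeq ▸ hdvd)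
    have hdeg₁ : χ₁.natDegree < p :=
      (natDegree_le_of_dvd (hχeq ▸ dvd_mul_left χ₁ _) hχ).trans_lt hdeg
    have hm : m + 1 ≤ χ₁.natDegree := by
      simpa using natDegree_le_of_dvd hdvd₁ hχ₁
    have hcard := card_support_derivative_lt (mt X_dvd_iff.2 hX)
    have := ih (derivative_ne_zero_of_natDegree_lt (by omega) hdeg₁)
      ((natDegree_derivative_le χ₁).trans_lt (by omega))
      (by simpa using pow_sub_one_dvd_derivative_of_pow_dvd hdvd₁)
    rw [hχeq, card_support_X_pow_mul]
    omega

open scoped Classical in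
theorem mul_card_nonzero_columns_le (hM : 0 < M) (hb : b ≠ 0) {k : ℕ} {c : F[X]}
    (hc : c.natDegree < M * p) (hdvd : expand F M ((X - C b) ^ k) ∣ c) :
    (k + 1) * #{i ∈ range M | column M i c ≠ 0} ≤ #c.support := by
  obtain ⟨g, rfl⟩ := hdvd
  rw [card_support_eq_sum_column hM, mul_comm, ← smul_eq_mul, ← sum_const]
  refine (sum_le_sum fun i hi => ?_).trans (sum_le_sum_of_subset (filter_subset _ _))
  obtain ⟨hi, hne⟩ := mem_filter.1 hi
  refine lt_card_support_of_X_sub_C_pow_dvd hb hne (natDegree_column_lt hM i hc) ?_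
  rw [column_expand_mul hM (mem_range.1 hi)]
  exact dvd_mul_right _ _

theorem add_one_le_card_support_of_expand_dvd (hM : 0 < M) (hb : b ≠ 0) {k : ℕ} {c : F[X]}
    (hc0 : c ≠ 0) (hc : c.natDegree < M * p) (hdvd : expand F M ((X - C b) ^ k) ∣ c) :
    k + 1 ≤ #c.support := by
  classical
  obtain ⟨i, hi, hne⟩ := exists_column_ne_zero hM hc0
  have hcard : 1 ≤ #{i ∈ range M | column M i c ≠ 0} :=
    card_pos.2 ⟨i, mem_filter.2 ⟨mem_range.2 hi, hne⟩⟩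
  exact le_trans (by simpa using hcard) (mul_card_nonzero_columns_le hM hb hc hdvd)

theorem mul_card_support_modByMonic_le (hM : 0 < M) (hb : b ≠ 0) {k : ℕ} {g : F[X]}
    (hc : (expand F M ((X - C b) ^ k) * g).natDegree < M * p) :
    (k + 1) * #(g %ₘ expand F M (X - C b)).support ≤
      #(expand F M ((X - C b) ^ k) * g).support := by
  classical
  refine le_trans (Nat.mul_le_mul_left _ (card_le_card fun i hi => ?_))
    (mul_card_nonzero_columns_le hM hb hc (dvd_mul_right _ _))
  have hiM : i < M :=
    (le_natDegree_of_mem_supp i hi).trans_lt (natDegree_modByMonic_expand_X_sub_C_lt hM g b)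
  rw [mem_support_iff, coeff_modByMonic_expand_X_sub_C hM g b hiM] at hi
  rw [mem_filter, mem_range, column_expand_mul hM hiM]
  exact ⟨hiM, mul_ne_zero (pow_ne_zero _ (X_sub_C_ne_zero b)) fun h => hi (by rw [h, eval_zero])⟩

end Polynomial

theorem Nat.sub_one_mul_add_self {n : ℕ} (hn : 0 < n) (m : ℕ) : (n - 1) * m + m = n * m := by
  rw [Nat.sub_one_mul, Nat.sub_add_cancel (Nat.le_mul_of_pos_left m hn)]

-- For `t < p^s`: the minimum weight of a nonzero multiple of `(Xⁿ - θ)^t` of degree `< np^s`.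
def minDist (p : ℕ) : ℕ → ℕ → ℕ
  | 0, _ => 1
  | s + 1, t =>
    if t = 0 then 1
    else if t ≤ (p - 1) * p ^ s then (t - 1) / p ^ s + 2
    else p * minDist p s (t - (p - 1) * p ^ s)

namespace minDist

variable {p : ℕ}

theorem zero_right (p s : ℕ) : minDist p s 0 = 1 := by
  cases s <;> rfl

theorem succ_of_le {s t : ℕ} (ht : t ≠ 0) (hle : t ≤ (p - 1) * p ^ s) :
    minDist p (s + 1) t = (t - 1) / p ^ s + 2 := by
  rw [minDist, if_neg ht, if_pos hle]

theorem succ_of_lt {s t : ℕ} (hlt : (p - 1) * p ^ s < t) :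
    minDist p (s + 1) t = p * minDist p s (t - (p - 1) * p ^ s) := by
  rw [minDist, if_neg (by omega), if_neg (by omega)]

theorem two_le (hp : 2 ≤ p) {s r : ℕ} (hr0 : r ≠ 0) (hr : r < p ^ s) : 2 ≤ minDist p s r := by
  induction s generalizing r with
  | zero => simp at hr; omega
  | succ s ih =>
    by_cases hle : r ≤ (p - 1) * p ^ s
    · rw [succ_of_le hr0 hle]
      exact Nat.le_add_left _ _
    · have := Nat.sub_one_mul_add_self (by omega : 0 < p) (p ^ s)
      rw [pow_succ, mul_comm] at hr
      rw [succ_of_lt (by omega)]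
      have := ih (r := r - (p - 1) * p ^ s) (by omega) (by omega)
      nlinarith

theorem succ_le_mul (hp : 2 ≤ p) {s ℓ r : ℕ} (hℓ : ℓ < p) (hr : r < p ^ s) :
    minDist p (s + 1) (p ^ s * ℓ + r) ≤ (ℓ + 1) * minDist p s r := by
  have hP : 0 < p ^ s := Nat.pos_of_ne_zero (pow_ne_zero _ (by omega))
  have hpP := Nat.sub_one_mul_add_self (by omega : 0 < p) (p ^ s)
  have hℓP : p ^ s * (ℓ + 1) ≤ p ^ s * p := Nat.mul_le_mul_left _ hℓ
  rw [mul_add, mul_one, mul_comm (p ^ s) p] at hℓP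
  rcases Nat.eq_zero_or_pos r with rfl | hr0
  · rcases Nat.eq_zero_or_pos ℓ with rfl | hℓ0
    · simp [zero_right]
    have hℓ1 : p ^ s ≤ p ^ s * ℓ := Nat.le_mul_of_pos_right _ hℓ0
    rw [zero_right, mul_one, add_zero, succ_of_le (by omega) (by omega)]
    have : (p ^ s * ℓ - 1) / p ^ s < ℓ := (Nat.div_lt_iff_lt_mul hP).2 (by rw [mul_comm ℓ]; omega)
    omega
  by_cases hle : p ^ s * ℓ + r ≤ (p - 1) * p ^ s
  · rw [succ_of_le (by omega) hle]
    have : (p ^ s * ℓ + r - 1) / p ^ s < ℓ + 1 :=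
      (Nat.div_lt_iff_lt_mul hP).2 (by rw [add_mul, one_mul, mul_comm ℓ]; omega)
    nlinarith [two_le hp hr0.ne' hr]
  · have hℓp : ℓ = p - 1 := by
      by_contra hne
      have : p ^ s * (ℓ + 1 + 1) ≤ p ^ s * p := Nat.mul_le_mul_left _ (by omega)
      rw [mul_add, mul_add, mul_one, mul_comm (p ^ s) p] at this
      omega
    subst hℓp
    rw [succ_of_lt (by rw [mul_comm]; omega), mul_comm (p ^ s), Nat.add_sub_cancel_left,
      Nat.sub_add_cancel (by omega)]

theorem succ_le_add_two {s ℓ r : ℕ} (hℓ : ℓ + 1 < p) (hr : r < p ^ s) :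
    minDist p (s + 1) (p ^ s * ℓ + r) ≤ ℓ + 2 := by
  have hP : 0 < p ^ s := Nat.pos_of_ne_zero (pow_ne_zero _ (by omega))
  rcases Nat.eq_zero_or_pos (p ^ s * ℓ + r) with h0 | ht0
  · rw [h0, zero_right]
    omega
  have hℓP : p ^ s * (ℓ + 1) ≤ p ^ s * (p - 1) := Nat.mul_le_mul_left _ (by omega)
  rw [mul_add, mul_one, mul_comm (p ^ s) (p - 1)] at hℓP
  rw [succ_of_le ht0.ne' (by omega)]
  have : (p ^ s * ℓ + r - 1) / p ^ s < ℓ + 1 :=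
    (Nat.div_lt_iff_lt_mul hP).2 (by rw [add_mul, one_mul, mul_comm ℓ]; omega)
  omega

theorem eq_of_mem (hp : 2 ≤ p) {s t i k : ℕ} (hi : 1 ≤ i) (hip : i < p) (hks : k < s)
    (h1 : p ^ s - p ^ (s - k) + (i - 1) * p ^ (s - k - 1) < t)
    (h2 : t ≤ p ^ s - p ^ (s - k) + i * p ^ (s - k - 1)) :
    minDist p s t = (i + 1) * p ^ k := by
  obtain ⟨j, rfl⟩ : ∃ j, s = j + k + 1 := ⟨s - k - 1, by omega⟩
  rw [show j + k + 1 - k = j + 1 by omega, show j + 1 - 1 = j by omega] at h1 h2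
  have hE : 0 < p ^ j := Nat.pos_of_ne_zero (pow_ne_zero _ (by omega))
  have hiE : i * p ^ j ≤ (p - 1) * p ^ j := Nat.mul_le_mul_right _ (by omega)
  have hi1 := Nat.sub_one_mul_add_self hi (p ^ j)
  have hpE := Nat.sub_one_mul_add_self (by omega : 0 < p) (p ^ j)
  induction k generalizing t with
  | zero =>
    simp only [add_zero, Nat.sub_self, zero_add, pow_zero, mul_one] at h1 h2 ⊢
    have : (t - 1) / p ^ j = i - 1 :=
      Nat.div_eq_of_lt_le (by omega) (by rw [Nat.sub_add_cancel hi]; omega)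
    rw [succ_of_le (by omega) (by omega), this]
    omega
  | succ k ih =>
    have hB : p ^ (j + 1) ≤ p ^ (j + k + 1) := Nat.pow_le_pow_right (by omega) (by omega)
    have hpB := Nat.sub_one_mul_add_self (by omega : 0 < p) (p ^ (j + k + 1))
    rw [show j + (k + 1) + 1 = j + k + 1 + 1 by omega] at h1 h2 ⊢
    rw [pow_succ p (j + k + 1), mul_comm _ p] at h1 h2
    rw [succ_of_lt (by omega), ih (by omega) (by omega) (by omega), pow_succ]
    ring

end minDist

section Weights

variable {F : Type*} [Field F] {p : ℕ} [CharP F p]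

theorem X_pow_sub_C_pow_char_pow (hp : p.Prime) (n s : ℕ) (θ : F) :
    (X ^ n - C θ) ^ p ^ s = expand F (n * p ^ s) (X - C (θ ^ p ^ s)) := by
  have : Fact p.Prime := ⟨hp⟩
  rw [sub_pow_char_pow, ← pow_mul, ← map_pow, map_sub, expand_X, expand_C]

theorem minDist_le_card_support (hp : p.Prime) {n : ℕ} (hn : 0 < n) {θ : F} (hθ : θ ≠ 0)
    (s t : ℕ) {c : F[X]} (hc : c ≠ 0) (hdeg : c.natDegree < n * p ^ s)
    (hdvd : (X ^ n - C θ) ^ t ∣ c) : minDist p s t ≤ #c.support := by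
  induction s generalizing t c with
  | zero => exact card_pos.2 (support_nonempty.2 hc)
  | succ s ih =>
    set M := n * p ^ s
    set b := θ ^ p ^ s
    have hps : 0 < p ^ s := pow_pos hp.pos s
    have hM : 0 < M := Nat.mul_pos hn hps
    have hb : b ≠ 0 := pow_ne_zero _ hθ
    have hcM : c.natDegree < M * p := by rwa [pow_succ, ← mul_assoc] at hdeg
    obtain ⟨ℓ, r, hr, rfl⟩ : ∃ ℓ r, r < p ^ s ∧ t = p ^ s * ℓ + r :=
      ⟨t / p ^ s, t % p ^ s, Nat.mod_lt t hps, (Nat.div_add_mod t _).symm⟩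
    obtain ⟨q, rfl⟩ := hdvd
    set g := (X ^ n - C θ) ^ r * q
    have hcg : (X ^ n - C θ) ^ (p ^ s * ℓ + r) * q = expand F M ((X - C b) ^ ℓ) * g := by
      rw [pow_add, pow_mul, X_pow_sub_C_pow_char_pow hp, ← map_pow, mul_assoc]
    rw [hcg] at hc hcM ⊢
    have hℓ : ℓ < p := lt_of_expand_X_sub_C_pow_dvd hc hcM (dvd_mul_right _ _)
    by_cases hrem : g %ₘ expand F M (X - C b) = 0
    · have hdvd : expand F M ((X - C b) ^ (ℓ + 1)) ∣ expand F M ((X - C b) ^ ℓ) * g := by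
        rw [pow_succ, map_mul]
        exact mul_dvd_mul_left _ ((modByMonic_eq_zero_iff_dvd
          ((monic_expand_iff hM).2 (monic_X_sub_C b))).1 hrem)
      exact (minDist.succ_le_add_two (lt_of_expand_X_sub_C_pow_dvd hc hcM hdvd) hr).trans
        (add_one_le_card_support_of_expand_dvd hM hb hc hcM hdvd)
    · have hrem_dvd : (X ^ n - C θ) ^ r ∣ g %ₘ expand F M (X - C b) := by
        have hg : (X ^ n - C θ) ^ r ∣ g := dvd_mul_right _ _
        have hq : (X ^ n - C θ) ^ r ∣ expand F M (X - C b) :=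
          X_pow_sub_C_pow_char_pow hp n s θ ▸ pow_dvd_pow _ hr.le
        simpa using dvd_add (hq.trans (dvd_modByMonic_sub g _)) hg
      calc minDist p (s + 1) (p ^ s * ℓ + r)
          ≤ (ℓ + 1) * minDist p s r := minDist.succ_le_mul hp.two_le hℓ hr
        _ ≤ (ℓ + 1) * #(g %ₘ expand F M (X - C b)).support :=
          Nat.mul_le_mul_left _ (ih _ hrem (natDegree_modByMonic_expand_X_sub_C_lt hM g b) hrem_dvd)
        _ ≤ _ := mul_card_support_modByMonic_le hM hb hcM

variable {β : F}

theorem card_support_X_sub_C_pow_of_lt (hp : p.Prime) (hβ : β ≠ 0) {a : ℕ} (ha : a < p) :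
    #((X - C β) ^ a).support = a + 1 := by
  rw [← card_range (a + 1)]
  congr 1
  ext k
  rw [mem_support_iff, sub_eq_add_neg, ← C_neg, coeff_X_add_C_pow, mem_range]
  constructor
  · intro h
    by_contra hk
    rw [Nat.choose_eq_zero_of_lt (by omega), Nat.cast_zero, mul_zero] at h
    exact h rfl
  · intro hk
    refine mul_ne_zero (pow_ne_zero _ (neg_ne_zero.2 hβ)) fun h => hp.one_lt.ne' ?_
    exact (hp.coprime_choose_of_lt ha (by omega)).eq_one_of_dvd
      ((CharP.cast_eq_zero_iff F p _).1 h)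

theorem card_support_X_sub_C_pow_add_mul (hp : p.Prime) (hβ : β ≠ 0) {a : ℕ} (ha : a < p)
    (u : ℕ) : #((X - C β) ^ (a + p * u)).support = (a + 1) * #((X - C (β ^ p)) ^ u).support := by
  have : Fact p.Prime := ⟨hp⟩
  have hfrob : (X - C β) ^ p = expand F p (X - C (β ^ p)) := by
    rw [sub_pow_char, map_sub, expand_X, expand_C, C_pow]
  rw [pow_add, pow_mul, hfrob, ← map_pow, card_support_mul_expand hp.pos (by simpa using ha),
    card_support_X_sub_C_pow_of_lt hp hβ ha]

theorem card_support_X_sub_C_pow_pow_mul (hp : p.Prime) (hβ : β ≠ 0) (j v : ℕ) :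
    #((X - C β) ^ (p ^ j * v)).support = #((X - C (β ^ p ^ j)) ^ v).support := by
  induction j generalizing β with
  | zero => simp
  | succ j ih =>
    rw [pow_succ', mul_assoc, ← zero_add (p * _), card_support_X_sub_C_pow_add_mul hp hβ hp.pos,
      ih (pow_ne_zero _ hβ), ← pow_mul, ← pow_succ', zero_add, one_mul]

theorem card_support_X_sub_C_pow_pow_sub_one (hp : p.Prime) (hβ : β ≠ 0) (k : ℕ) :
    #((X - C β) ^ (p ^ k - 1)).support = p ^ k := by
  induction k generalizing β with
  | zero => simp [card_support_one]
  | succ k ih =>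
    have hsplit : p ^ (k + 1) - 1 = (p - 1) + p * (p ^ k - 1) := by
      rw [pow_succ', Nat.mul_sub_one]
      have : p ≤ p * p ^ k := Nat.le_mul_of_pos_right p (pow_pos hp.pos k)
      have := hp.pos
      omega
    rw [hsplit, card_support_X_sub_C_pow_add_mul hp hβ (by have := hp.pos; omega),
      ih (pow_ne_zero _ hβ), Nat.sub_add_cancel hp.pos, pow_succ']

theorem card_support_X_pow_sub_C_pow_eq (hp : p.Prime) {n : ℕ} (hn : 0 < n) {θ : F}
    (hθ : θ ≠ 0) {s i k : ℕ} (hi : i < p) (hks : k < s) :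
    #((X ^ n - C θ) ^ (p ^ s - p ^ (s - k) + i * p ^ (s - k - 1))).support = (i + 1) * p ^ k := by
  obtain ⟨j, rfl⟩ : ∃ j, s = j + k + 1 := ⟨s - k - 1, by omega⟩
  -- base `p` digits: `j` zeros, then `i`, then `k` digits `p - 1`
  have hexp : p ^ (j + k + 1) - p ^ (j + k + 1 - k) + i * p ^ (j + k + 1 - k - 1) =
      p ^ j * (i + p * (p ^ k - 1)) := by
    rw [show j + k + 1 - k - 1 = j by omega, show j + k + 1 - k = j + 1 by omega, mul_add,
      ← mul_assoc, ← pow_succ, Nat.mul_sub_one, ← pow_add,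
      show j + 1 + k = j + k + 1 by omega, mul_comm i]
    have : p ^ (j + 1) ≤ p ^ (j + k + 1) := Nat.pow_le_pow_right hp.pos (by omega)
    omega
  have hexpand : X ^ n - C θ = expand F n (X - C θ) := by rw [map_sub, expand_X, expand_C]
  rw [hexp, hexpand, ← map_pow, ← one_mul (expand F n _),
    card_support_mul_expand hn (by simpa using hn), card_support_one, one_mul,
    card_support_X_sub_C_pow_pow_mul hp hθ, card_support_X_sub_C_pow_add_mul hp
      (pow_ne_zero _ hθ) hi, card_support_X_sub_C_pow_pow_sub_one hp (pow_ne_zero _ (pow_ne_zero _ hθ))]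

end Weights

section Codes

theorem comap_mk_span_mk {R : Type*} [CommRing R] {q g : R} (hg : g ∣ q) :
    Ideal.comap (Ideal.Quotient.mk (Ideal.span {q}))
      (Ideal.span {Ideal.Quotient.mk (Ideal.span {q}) g}) = Ideal.span {g} := by
  have hmap : Ideal.span {Ideal.Quotient.mk (Ideal.span {q}) g} =
      Ideal.map (Ideal.Quotient.mk (Ideal.span {q})) (Ideal.span {g}) := by
    rw [Ideal.map_span, Set.image_singleton]
  rw [hmap, Ideal.comap_map_of_surjective _ Ideal.Quotient.mk_surjective,
    ← RingHom.ker_eq_comap_bot, Ideal.mk_ker, sup_eq_left, Ideal.span_singleton_le_span_singleton]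
  exact hg

theorem mk_mem_span_mk_iff {R : Type*} [CommRing R] {q g : R} (hg : g ∣ q) (v : R) :
    Ideal.Quotient.mk (Ideal.span {q}) v ∈ Ideal.span {Ideal.Quotient.mk (Ideal.span {q}) g} ↔
      g ∣ v := by
  rw [← Ideal.mem_comap, comap_mk_span_mk hg, Ideal.mem_span_singleton]

theorem existsUnique_eq_span_mk_pow {R : Type*} [CommRing R] [IsDomain R]
    [IsPrincipalIdealRing R] {f : R} (hf : Irreducible f) (P : ℕ)
    (I : Ideal (R ⧸ Ideal.span {f ^ P})) :
    ∃! υ : ℕ, υ ≤ P ∧ I = Ideal.span {Ideal.Quotient.mk (Ideal.span {f ^ P}) (f ^ υ)} := by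
  obtain ⟨g, hg⟩ := (IsPrincipalIdealRing.principal (Ideal.comap (Ideal.Quotient.mk _) I)).principal
  have hgP : g ∣ f ^ P := by
    rw [← Ideal.mem_span_singleton, ← Ideal.submodule_span_eq, ← hg, Ideal.mem_comap,
      Ideal.Quotient.eq_zero_iff_mem.2 (Ideal.mem_span_singleton_self _)]
    exact I.zero_mem
  obtain ⟨υ, hυ, hassoc⟩ := (dvd_prime_pow hf.prime P).1 hgP
  have hI : I = Ideal.span {Ideal.Quotient.mk (Ideal.span {f ^ P}) (f ^ υ)} := by
    rw [← Ideal.map_comap_of_surjective _ Ideal.Quotient.mk_surjective I, hg,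
      Ideal.submodule_span_eq, Ideal.span_singleton_eq_span_singleton.2 hassoc, Ideal.map_span,
      Set.image_singleton]
  refine ⟨υ, ⟨hυ, hI⟩, fun υ' ⟨hυ', hI'⟩ => ?_⟩
  have hassoc' : Associated (f ^ υ') (f ^ υ) := by
    rw [← Ideal.span_singleton_eq_span_singleton, ← comap_mk_span_mk (pow_dvd_pow f hυ'),
      ← comap_mk_span_mk (pow_dvd_pow f hυ), ← hI', ← hI]
  exact le_antisymm ((pow_dvd_pow_iff hf.ne_zero hf.not_isUnit).1 hassoc'.dvd)
    ((pow_dvd_pow_iff hf.ne_zero hf.not_isUnit).1 hassoc'.symm.dvd)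

variable {A : Type} [CommRing A]

theorem mk_polyRep (q : A[X]) (c : A[X] ⧸ Ideal.span {q}) :
    Ideal.Quotient.mk (Ideal.span {q}) (polyRep q c) = c := by
  rw [polyRep, modByMonic_eq_sub_mul_div _ q, map_sub, map_mul,
    Ideal.Quotient.eq_zero_iff_mem.2 (Ideal.mem_span_singleton_self q), zero_mul, sub_zero]
  exact Function.surjInv_eq Ideal.Quotient.mk_surjective c

theorem polyRep_mk [Nontrivial A] {q : A[X]} (hq : q.Monic) {v : A[X]}
    (hv : v.natDegree < q.natDegree) : polyRep q (Ideal.Quotient.mk (Ideal.span {q}) v) = v := by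
  have hdvd : q ∣ Function.surjInv Ideal.Quotient.mk_surjective
      (Ideal.Quotient.mk (Ideal.span {q}) v) - v :=
    Ideal.mem_span_singleton.1 (Ideal.Quotient.eq.1 (Function.surjInv_eq _ _))
  rw [polyRep, modByMonic_eq_of_dvd_sub hq hdvd,
    (modByMonic_eq_self_iff hq).2 (degree_lt_degree hv)]

theorem dH_span_mk [Nontrivial A] {q g : A[X]} (hq : q.Monic) (hg : g ∣ q) :
    dH q (Ideal.span {Ideal.Quotient.mk (Ideal.span {q}) g}) =
      sInf {w : ℕ | ∃ v : A[X], v ≠ 0 ∧ v.natDegree < q.natDegree ∧ g ∣ v ∧ w = #v.support} := by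
  rw [dH]
  congr 1
  ext w
  constructor
  · rintro ⟨c, hc, hc0, rfl⟩
    have hrep := mk_polyRep q c
    have hrep0 : polyRep q c ≠ 0 := fun h => hc0 (by rw [← hrep, h, map_zero])
    refine ⟨polyRep q c, hrep0, natDegree_lt_natDegree hrep0 (degree_modByMonic_lt _ hq), ?_, rfl⟩
    rwa [← mk_mem_span_mk_iff hg, hrep]
  · rintro ⟨v, hv0, hvdeg, hgv, rfl⟩
    refine ⟨Ideal.Quotient.mk _ v, (mk_mem_span_mk_iff hg v).2 hgv, fun h => ?_, ?_⟩
    · rw [Ideal.Quotient.eq_zero_iff_mem, Ideal.mem_span_singleton] at h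
      exact hq.not_dvd_of_natDegree_lt hv0 hvdeg h
    · rw [wH, polyRep_mk hq hvdeg]

theorem dH_bot (q : A[X]) : dH q ⊥ = 0 := by
  simp [dH]

variable {F : Type} [Field F] {p : ℕ} [CharP F p] {n : ℕ} {θ : F}

theorem dH_span_pow_eq_minDist (hp : p.Prime) (hn : 0 < n) (hθ : θ ≠ 0) {s υ u : ℕ}
    (hυu : υ ≤ u) (hu : u < p ^ s) (hwt : #((X ^ n - C θ) ^ u).support = minDist p s υ) :
    dH ((X ^ n - C θ) ^ p ^ s) (Ideal.span {Ideal.Quotient.mk (Ideal.span {(X ^ n - C θ) ^ p ^ s})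
      ((X ^ n - C θ) ^ υ)}) = minDist p s υ := by
  have hmonic : (X ^ n - C θ).Monic := monic_X_pow_sub_C θ hn.ne'
  have hdeg (k : ℕ) : ((X ^ n - C θ) ^ k).natDegree = k * n := by
    rw [natDegree_pow, natDegree_X_pow_sub_C]
  rw [dH_span_mk (hmonic.pow _) (pow_dvd_pow _ (hυu.trans hu.le))]
  refine IsLeast.csInf_eq ⟨⟨(X ^ n - C θ) ^ u, pow_ne_zero _ hmonic.ne_zero, ?_,
    pow_dvd_pow _ hυu, hwt.symm⟩, ?_⟩
  · rw [hdeg, hdeg]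
    exact Nat.mul_lt_mul_of_pos_right hu hn
  · rintro w ⟨v, hv0, hvdeg, hdvd, rfl⟩
    rw [hdeg, mul_comm] at hvdeg
    exact minDist_le_card_support hp hn hθ s υ hv0 hvdeg hdvd

theorem dH_span_pow_eq_of_mem (hp : p.Prime) (hn : 0 < n) (hθ : θ ≠ 0) {s υ i k : ℕ}
    (hi : 1 ≤ i) (hip : i < p) (hks : k < s)
    (h1 : p ^ s - p ^ (s - k) + (i - 1) * p ^ (s - k - 1) < υ)
    (h2 : υ ≤ p ^ s - p ^ (s - k) + i * p ^ (s - k - 1)) :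
    dH ((X ^ n - C θ) ^ p ^ s) (Ideal.span {Ideal.Quotient.mk (Ideal.span {(X ^ n - C θ) ^ p ^ s})
      ((X ^ n - C θ) ^ υ)}) = (i + 1) * p ^ k := by
  have hυ := minDist.eq_of_mem hp.two_le hi hip hks h1 h2
  have hlt : p ^ s - p ^ (s - k) + i * p ^ (s - k - 1) < p ^ s := by
    have hi' : i * p ^ (s - k - 1) < p ^ (s - k) := by
      rw [show s - k = s - k - 1 + 1 by omega, pow_succ']
      exact Nat.mul_lt_mul_of_pos_right hip (pow_pos hp.pos _)
    have : p ^ (s - k) ≤ p ^ s := Nat.pow_le_pow_right hp.pos (Nat.sub_le s k)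
    omega
  rw [← hυ]
  exact dH_span_pow_eq_minDist hp hn hθ h2 hlt
    (by rw [hυ, card_support_X_pow_sub_C_pow_eq hp hn hθ hip hks])

end Codes

theorem stmt0_general (p s n m : ℕ) (hp : p.Prime) (hs : 0 < s) (hn : 0 < n)
    (F : Type) [Field F] [Fintype F] (hF : Fintype.card F = p ^ m)
    (η η₀ : F) (hη : η ≠ 0) (hη₀ : η₀ ^ p ^ s = η)
    (hirr : Irreducible (X ^ n - C η₀ : F[X])) :
    (∀ I : Ideal (F[X] ⧸ Ideal.span {(X ^ (n * p ^ s) - C η : F[X])}),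
      ∃! υ : ℕ, υ ≤ p ^ s ∧
        I = Ideal.span {Ideal.Quotient.mk (Ideal.span {(X ^ (n * p ^ s) - C η : F[X])})
          ((X ^ n - C η₀) ^ υ)}) ∧
    (∀ υ ≤ p ^ s,
      (υ = 0 →
        dH (X ^ (n * p ^ s) - C η)
          (Ideal.span {Ideal.Quotient.mk (Ideal.span {(X ^ (n * p ^ s) - C η : F[X])})
            ((X ^ n - C η₀) ^ υ)}) = 1) ∧
      (∀ ℓ, ℓ ≤ p - 2 → ℓ * p ^ (s - 1) + 1 ≤ υ → υ ≤ (ℓ + 1) * p ^ (s - 1) →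
        dH (X ^ (n * p ^ s) - C η)
          (Ideal.span {Ideal.Quotient.mk (Ideal.span {(X ^ (n * p ^ s) - C η : F[X])})
            ((X ^ n - C η₀) ^ υ)}) = ℓ + 2) ∧
      (∀ i k, 1 ≤ i → i ≤ p - 1 → 1 ≤ k → k ≤ s - 1 →
        p ^ s - p ^ (s - k) + (i - 1) * p ^ (s - k - 1) + 1 ≤ υ →
        υ ≤ p ^ s - p ^ (s - k) + i * p ^ (s - k - 1) →
        dH (X ^ (n * p ^ s) - C η)
          (Ideal.span {Ideal.Quotient.mk (Ideal.span {(X ^ (n * p ^ s) - C η : F[X])})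
            ((X ^ n - C η₀) ^ υ)}) = (i + 1) * p ^ k) ∧
      (υ = p ^ s →
        dH (X ^ (n * p ^ s) - C η)
          (Ideal.span {Ideal.Quotient.mk (Ideal.span {(X ^ (n * p ^ s) - C η : F[X])})
            ((X ^ n - C η₀) ^ υ)}) = 0)) := by
  have : Fact p.Prime := ⟨hp⟩
  have : CharP F p := charP_of_card_eq_prime_pow hF
  have hη₀0 : η₀ ≠ 0 := by
    rintro rfl
    exact hη (by rw [← hη₀, zero_pow (pow_ne_zero _ hp.ne_zero)])
  have hq : (X ^ (n * p ^ s) - C η : F[X]) = (X ^ n - C η₀) ^ p ^ s := by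
    rw [X_pow_sub_C_pow_char_pow hp, map_sub, expand_X, expand_C, hη₀]
  rw [hq]
  refine ⟨existsUnique_eq_span_mk_pow hirr _, fun υ hυ => ⟨?_, ?_, ?_, ?_⟩⟩
  · rintro rfl
    rw [dH_span_pow_eq_minDist hp hn hη₀0 le_rfl (pow_pos hp.pos s) (by
      rw [pow_zero, card_support_one, minDist.zero_right]), minDist.zero_right]
  · intro ℓ hℓ h1 h2
    have := dH_span_pow_eq_of_mem hp hn hη₀0 (υ := υ) (i := ℓ + 1) (k := 0) (by omega)
      (by have := hp.two_le; omega) hs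
      (by simp only [Nat.sub_zero, Nat.sub_self, zero_add, Nat.add_sub_cancel]; omega)
      (by simpa using h2)
    simpa using this
  · intro i k hi1 hi2 hk1 hk2 h1 h2
    exact dH_span_pow_eq_of_mem hp hn hη₀0 hi1 (by omega) (by omega) h1 h2
  · rintro rfl
    rw [Ideal.Quotient.eq_zero_iff_mem.2 (Ideal.mem_span_singleton_self _),
      Ideal.span_singleton_eq_bot.2 rfl, dH_bot]

/-- classification and Hamming distances of `η`-constacyclic codes of length
`np^s` over the finite field `F` with `p^m` elements, when `x^n − η₀` is irreducible. -/
theorem stmt0 (p s n m : ℕ) (hp : p.Prime) (hs : 0 < s) (hn : 0 < n) (hm : 0 < m)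
    (hnp : Nat.gcd n p = 1)
    (F : Type) [Field F] [Fintype F] (hF : Fintype.card F = p ^ m)
    (η η₀ : F) (hη : η ≠ 0) (hη₀ : η₀ ^ p ^ s = η)
    (hirr : Irreducible (X ^ n - C η₀ : F[X])) :
    (∀ I : Ideal (F[X] ⧸ Ideal.span {(X ^ (n * p ^ s) - C η : F[X])}),
      ∃! υ : ℕ, υ ≤ p ^ s ∧
        I = Ideal.span {Ideal.Quotient.mk (Ideal.span {(X ^ (n * p ^ s) - C η : F[X])})
          ((X ^ n - C η₀) ^ υ)}) ∧
    (∀ υ ≤ p ^ s,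
      (υ = 0 →
        dH (X ^ (n * p ^ s) - C η)
          (Ideal.span {Ideal.Quotient.mk (Ideal.span {(X ^ (n * p ^ s) - C η : F[X])})
            ((X ^ n - C η₀) ^ υ)}) = 1) ∧
      (∀ ℓ, ℓ ≤ p - 2 → ℓ * p ^ (s - 1) + 1 ≤ υ → υ ≤ (ℓ + 1) * p ^ (s - 1) →
        dH (X ^ (n * p ^ s) - C η)
          (Ideal.span {Ideal.Quotient.mk (Ideal.span {(X ^ (n * p ^ s) - C η : F[X])})
            ((X ^ n - C η₀) ^ υ)}) = ℓ + 2) ∧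
      (∀ i k, 1 ≤ i → i ≤ p - 1 → 1 ≤ k → k ≤ s - 1 →
        p ^ s - p ^ (s - k) + (i - 1) * p ^ (s - k - 1) + 1 ≤ υ →
        υ ≤ p ^ s - p ^ (s - k) + i * p ^ (s - k - 1) →
        dH (X ^ (n * p ^ s) - C η)
          (Ideal.span {Ideal.Quotient.mk (Ideal.span {(X ^ (n * p ^ s) - C η : F[X])})
            ((X ^ n - C η₀) ^ υ)}) = (i + 1) * p ^ k) ∧
      (υ = p ^ s →
        dH (X ^ (n * p ^ s) - C η)
          (Ideal.span {Ideal.Quotient.mk (Ideal.span {(X ^ (n * p ^ s) - C η : F[X])})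
            ((X ^ n - C η₀) ^ υ)}) = 0)) :=
  stmt0_general p s n m hp hs hn F hF η η₀ hη hη₀ hirr
end

section
/- Let f ∈ R[x] be a monic basic irreducible polynomial and let g ∈ R[x] be such that f and g are coprime in R[x] (i.e., ⟨f⟩ + ⟨g⟩ = R[x]). Set K = R[x]/⟨f^{p^s} + γg⟩. Then: (a) the image in K of any polynomial of R[x] that is coprime to f is a unit of K; (b) the image of f in K is nilpotent, and the ideals of K generated by f^{p^s} and by γ coincide; (c) the nilpotency index of the image of f in K (the least positive integer N with f^N = 0 in K) equals 2p^s. -/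
/-!
Since `γ² = 0`, `f^{2e} = (f^e + γg)(f^e - γg)` vanishes in `K` (with `e = p^s`), so `f` is
nilpotent there and everything coprime to `f` becomes a unit; in particular `g` does, and the
defining relation `f^e = -γg` gives `⟨f^e⟩ = ⟨γ⟩`. For the exact index one shows
`f^{2e-1} ∉ ⟨f^e + γg⟩`: if `f^{2e-1} = (f^e + γg)h`, reducing mod `γ` forces
`h = f^{e-1} + γt`, and expanding leaves `γ(f^e t + g f^{e-1}) = 0`. As the annihilator of `γ`
is `⟨γ⟩`, reducing mod `γ` once more gives `f̄ ∣ ḡ`, against `f̄` being irreducible and coprime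
to `ḡ`.
-/

open Polynomial

theorem IsCoprime.isUnit_of_isNilpotent_left {A : Type*} [CommRing A] {x a : A}
    (h : IsCoprime x a) (hx : IsNilpotent x) : IsUnit a := by
  obtain ⟨u, v, huv⟩ := h
  have hva : v * a = 1 - u * x := by linear_combination huv
  have : IsUnit (v * a) := hva ▸ ((Commute.all u x).isNilpotent_mul_left hx).isUnit_one_sub
  exact isUnit_of_mul_isUnit_right this

theorem isLeast_pow_eq_zero {M : Type*} [MonoidWithZero M] {x : M} {n : ℕ}
    (h : x ^ (n + 1) = 0) (h' : x ^ n ≠ 0) : IsLeast {N : ℕ | 0 < N ∧ x ^ N = 0} (n + 1) :=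
  ⟨⟨n.succ_pos, h⟩, fun _ ⟨_, hN⟩ => by
    by_contra! hlt
    exact h' (pow_eq_zero_of_le (Nat.lt_succ_iff.mp hlt) hN)⟩

theorem pow_two_mul_mem_span_pow_add_mul {A : Type*} [CommRing A] {c : A} (hc : c ^ 2 = 0)
    (x y : A) (e : ℕ) : x ^ (2 * e) ∈ Ideal.span {x ^ e + c * y} :=
  Ideal.mem_span_singleton'.mpr ⟨x ^ e - c * y, by linear_combination (-y ^ 2) * hc⟩

theorem Ideal.isPrime_of_forall_mem_iff_not_isUnit {A : Type*} [CommRing A] {I : Ideal A}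
    (hI : ∀ a, a ∈ I ↔ ¬IsUnit a) : I.IsPrime :=
  ⟨(Ideal.ne_top_iff_one I).mpr fun h => (hI 1).mp h isUnit_one, fun {a b} hab => by
    simp only [hI, IsUnit.mul_iff, not_and_or] at hab ⊢
    exact hab⟩

section SquareZeroGenerator

variable {R : Type*} [CommRing R] {γ : R}

theorem Polynomial.map_mk_span_singleton_eq_zero_iff (P : R[X]) :
    P.map (Ideal.Quotient.mk (Ideal.span {γ})) = 0 ↔ C γ ∣ P := by
  simp only [C_dvd_iff_dvd_coeff, Polynomial.ext_iff, coeff_map, coeff_zero,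
    Ideal.Quotient.eq_zero_iff_mem, Ideal.mem_span_singleton]

theorem Polynomial.map_mk_span_singleton_eq_zero_of_C_mul_eq_zero
    (hann : ∀ a : R, γ * a = 0 → a ∈ Ideal.span {γ}) {P : R[X]} (hP : C γ * P = 0) :
    P.map (Ideal.Quotient.mk (Ideal.span {γ})) = 0 := by
  ext i
  rw [coeff_map, coeff_zero, Ideal.Quotient.eq_zero_iff_mem]
  exact hann _ (by simpa only [coeff_C_mul, coeff_zero] using congrArg (coeff · i) hP)

theorem pow_two_mul_add_one_notMem_span [(Ideal.span {γ}).IsPrime] (hγ2 : γ ^ 2 = 0)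
    (hann : ∀ a : R, γ * a = 0 → a ∈ Ideal.span {γ}) {f g : R[X]}
    (hf : f.map (Ideal.Quotient.mk (Ideal.span {γ})) ≠ 0)
    (hfg : ¬f.map (Ideal.Quotient.mk (Ideal.span {γ})) ∣
      g.map (Ideal.Quotient.mk (Ideal.span {γ})))
    (k : ℕ) : f ^ (2 * k + 1) ∉ Ideal.span {f ^ (k + 1) + C γ * g} := by
  set q := Ideal.Quotient.mk (Ideal.span {γ})
  have hqγ : q γ = 0 := Ideal.Quotient.eq_zero_iff_mem.mpr (Ideal.mem_span_singleton_self γ)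
  intro hmem
  obtain ⟨h, hh⟩ := Ideal.mem_span_singleton'.mp hmem
  have hh_bar : h.map q = f.map q ^ k := by
    apply mul_left_cancel₀ (pow_ne_zero (k + 1) hf)
    have := congrArg (map q) hh
    simp only [Polynomial.map_mul, Polynomial.map_add, Polynomial.map_pow, map_C, hqγ, C_0,
      zero_mul, add_zero] at this
    linear_combination this
  obtain ⟨t, ht⟩ : C γ ∣ h - f ^ k := by
    rw [← map_mk_span_singleton_eq_zero_iff, Polynomial.map_sub, Polynomial.map_pow, hh_bar,
      sub_self]
  have hCγ2 : C γ ^ 2 = 0 := by rw [← C_pow, hγ2, C_0]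
  have hγ_mul : C γ * (f ^ (k + 1) * t + g * f ^ k) = 0 := by
    linear_combination hh - (f ^ (k + 1) + C γ * g) * ht - g * t * hCγ2
  have hbar := map_mk_span_singleton_eq_zero_of_C_mul_eq_zero hann hγ_mul
  simp only [Polynomial.map_add, Polynomial.map_mul, Polynomial.map_pow] at hbar
  refine hfg ⟨-t.map q, mul_left_cancel₀ (pow_ne_zero k hf) ?_⟩
  linear_combination hbar

end SquareZeroGenerator

theorem stmt1_general {R : Type} [CommRing R]
    (p s : ℕ) (hp : p.Prime)
    (γ : R) (hγ : γ ≠ 0) (hγ2 : γ ^ 2 = 0)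
    (hmax : ∀ a : R, a ∈ Ideal.span {γ} ↔ ¬ IsUnit a)
    (f g : R[X])
    (hfi : Irreducible (f.map (Ideal.Quotient.mk (Ideal.span {γ}))))
    (hfg : IsCoprime f g) :
    (∀ a : R[X], IsCoprime f a →
        IsUnit (Ideal.Quotient.mk (Ideal.span {f ^ p ^ s + C γ * g}) a)) ∧
    IsNilpotent (Ideal.Quotient.mk (Ideal.span {f ^ p ^ s + C γ * g}) f) ∧
    Ideal.span {Ideal.Quotient.mk (Ideal.span {f ^ p ^ s + C γ * g}) (f ^ p ^ s)} =
      Ideal.span {Ideal.Quotient.mk (Ideal.span {f ^ p ^ s + C γ * g}) (C γ)} ∧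
    IsLeast {N : ℕ | 0 < N ∧
      (Ideal.Quotient.mk (Ideal.span {f ^ p ^ s + C γ * g}) f) ^ N = 0} (2 * p ^ s) := by
  have := Ideal.isPrime_of_forall_mem_iff_not_isUnit hmax
  have hann (a : R) (ha : γ * a = 0) : a ∈ Ideal.span {γ} :=
    (hmax a).mpr fun hu => hγ (hu.mul_left_eq_zero.mp ha)
  obtain ⟨k, hk⟩ : ∃ k, p ^ s = k + 1 :=
    Nat.exists_eq_succ_of_ne_zero (pow_ne_zero s hp.ne_zero)
  rw [hk, show 2 * (k + 1) = 2 * k + 1 + 1 by ring]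
  set φ := Ideal.Quotient.mk (Ideal.span {f ^ (k + 1) + C γ * g})
  have hnil : φ f ^ (2 * k + 1 + 1) = 0 := by
    rw [← map_pow, Ideal.Quotient.eq_zero_iff_mem, show 2 * k + 1 + 1 = 2 * (k + 1) by ring]
    exact pow_two_mul_mem_span_pow_add_mul (by rw [← C_pow, hγ2, C_0]) f g (k + 1)
  have hunit (a : R[X]) (ha : IsCoprime f a) : IsUnit (φ a) :=
    (ha.map φ).isUnit_of_isNilpotent_left ⟨_, hnil⟩
  have hrel : φ (f ^ (k + 1)) = φ (C γ) * -φ g := by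
    have hF : φ (f ^ (k + 1) + C γ * g) = 0 :=
      Ideal.Quotient.eq_zero_iff_mem.mpr (Ideal.mem_span_singleton_self _)
    rw [map_add, map_mul] at hF
    linear_combination hF
  refine ⟨hunit, ⟨_, hnil⟩, ?_, isLeast_pow_eq_zero hnil ?_⟩
  · rw [hrel, Ideal.span_singleton_mul_right_unit (hunit g hfg).neg]
  · rw [← map_pow, Ne, Ideal.Quotient.eq_zero_iff_mem]
    refine pow_two_mul_add_one_notMem_span hγ2 hann hfi.ne_zero (fun hdvd => hfi.not_isUnit ?_) k
    exact (hfg.map (mapRingHom (Ideal.Quotient.mk (Ideal.span {γ})))).isUnit_of_dvd' dvd_rfl hdvd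

/-- units, nilpotency and the ideal identity `⟨f^{p^s}⟩ = ⟨γ⟩` in
`K = R[x]/⟨f^{p^s} + γ g⟩`, for a finite commutative chain ring `R` with
nilpotency index 2, `f` monic basic irreducible and `g` coprime to `f`. -/
theorem stmt1 {R : Type} [CommRing R] [Finite R]
    (p m s n : ℕ) (hp : p.Prime) (hm : 0 < m) (hs : 0 < s) (hn : 0 < n)
    (hnp : Nat.gcd n p = 1)
    (γ : R) (hγ : γ ≠ 0) (hγ2 : γ ^ 2 = 0)
    (hmax : ∀ a : R, a ∈ Ideal.span {γ} ↔ ¬ IsUnit a)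
    (hres : Nat.card (R ⧸ Ideal.span {γ}) = p ^ m)
    (f g : R[X]) (hf : f.Monic)
    (hfi : Irreducible (f.map (Ideal.Quotient.mk (Ideal.span {γ}))))
    (hfg : IsCoprime f g) :
    (∀ a : R[X], IsCoprime f a →
        IsUnit (Ideal.Quotient.mk (Ideal.span {f ^ p ^ s + C γ * g}) a)) ∧
    IsNilpotent (Ideal.Quotient.mk (Ideal.span {f ^ p ^ s + C γ * g}) f) ∧
    Ideal.span {Ideal.Quotient.mk (Ideal.span {f ^ p ^ s + C γ * g}) (f ^ p ^ s)} =
      Ideal.span {Ideal.Quotient.mk (Ideal.span {f ^ p ^ s + C γ * g}) (C γ)} ∧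
    IsLeast {N : ℕ | 0 < N ∧
      (Ideal.Quotient.mk (Ideal.span {f ^ p ^ s + C γ * g}) f) ^ N = 0} (2 * p ^ s) :=
  stmt1_general p s hp γ hγ hγ2 hmax f g hfi hfg
end

section
/- Let f ∈ R[x] be a monic basic irreducible polynomial and let M ∈ R[x] be coprime to f in R[x]. Set K = R[x]/⟨f^{p^s} + γ f^{p^{s−1}} M⟩. Then in K the ideals generated by f^{p^s} and by γ f^{p^{s−1}} coincide, and the nilpotency index of the image of f in K (the least positive integer N with f^N = 0 in K) equals 2p^s − p^{s−1}. -/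
/-!
Write `g = f^b + γ f^a M` with `a = p^{s-1} < b = p^s`. Modulo `g` we have `f^b = -γ f^a M`,
and since `f^b` and `M` are coprime, `γ f^a` is in turn a multiple of `f^b`; this gives the
equality of ideals. Because `γ² = 0`, `γ g = γ f^b`, so `f^{2b-a} = f^{b-a} g - γ M g` vanishes
modulo `g`. Conversely, if `g` divided `f^{2b-a-1}`, cancelling the monic factors `f^a` and
writing `k = b - a - 1` would give `(f^{k+1} + γ M) q = f^{2k+1}`. Multiplying by `γ` forces
`q ≡ f^k` modulo `γ`, and substituting back shows `γ (M - f r) = 0` for some `r`; as `γ x = 0`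
only for `x ∈ ⟨γ⟩`, the reduction of `f` divides that of `M`, contradicting coprimality and
irreducibility modulo `γ`.
-/

open Polynomial

theorem isLeast_pow_eq_zero_s2 {M₀ : Type*} [MonoidWithZero M₀] {x : M₀} {N : ℕ} (hN : 0 < N)
    (hx : x ^ N = 0) (hx' : x ^ (N - 1) ≠ 0) : IsLeast {k : ℕ | 0 < k ∧ x ^ k = 0} N :=
  ⟨⟨hN, hx⟩, fun _ ⟨_, hk⟩ => by
    by_contra hlt
    exact hx' (pow_eq_zero_of_le (by omega) hk)⟩

section

variable {R : Type*} [CommRing R] {γ : R} {f M : R[X]}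

theorem Polynomial.Monic.C_dvd_of_C_mul_mul_eq_zero (hann : ∀ x : R, γ * x = 0 → γ ∣ x)
    (hf : f.Monic) {P : R[X]} (h : C γ * (f * P) = 0) : C γ ∣ P := by
  have hγP : C γ * P = 0 :=
    hf.isRegular.left (show f * (C γ * P) = f * 0 by rw [mul_zero, mul_left_comm, h])
  rw [C_dvd_iff_dvd_coeff]
  intro i
  apply hann
  simpa only [coeff_C_mul, coeff_zero] using congrArg (coeff · i) hγP

theorem map_dvd_map_of_pow_add_C_mul_dvd (hf : f.Monic) (hγ2 : γ ^ 2 = 0)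
    (hann : ∀ x : R, γ * x = 0 → γ ∣ x) {k : ℕ} (h : f ^ (k + 1) + C γ * M ∣ f ^ (2 * k + 1)) :
    f.map (Ideal.Quotient.mk (Ideal.span {γ})) ∣ M.map (Ideal.Quotient.mk (Ideal.span {γ})) := by
  obtain ⟨q, hq⟩ := h
  have hCγ2 : (C γ : R[X]) ^ 2 = 0 := by rw [← C_pow, hγ2, C_0]
  obtain ⟨r, hr⟩ : C γ ∣ f ^ k - q :=
    (hf.pow (k + 1)).C_dvd_of_C_mul_mul_eq_zero hann
      (by linear_combination C γ * hq + M * q * hCγ2)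
  obtain ⟨w, hw⟩ : C γ ∣ M - f * r :=
    (hf.pow k).C_dvd_of_C_mul_mul_eq_zero hann
      (by linear_combination -hq + (f ^ (k + 1) + C γ * M) * hr + M * r * hCγ2)
  have hγ0 : Ideal.Quotient.mk (Ideal.span {γ}) γ = 0 := Ideal.Quotient.mk_singleton_self γ
  refine ⟨r.map (Ideal.Quotient.mk (Ideal.span {γ})), ?_⟩
  have := congrArg (Polynomial.map (Ideal.Quotient.mk (Ideal.span {γ}))) hw
  simp only [Polynomial.map_sub, Polynomial.map_mul, map_C, hγ0, C_0, zero_mul] at this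
  exact sub_eq_zero.mp this

variable (γ f M)

theorem span_mk_pow_eq_span_mk_C_mul_pow (hfM : IsCoprime f M) (a b : ℕ) :
    Ideal.span {Ideal.Quotient.mk (Ideal.span {f ^ b + C γ * f ^ a * M}) (f ^ b)} =
      Ideal.span {Ideal.Quotient.mk (Ideal.span {f ^ b + C γ * f ^ a * M}) (C γ * f ^ a)} := by
  set π := Ideal.Quotient.mk (Ideal.span {f ^ b + C γ * f ^ a * M})
  have hg : π (f ^ b) + π (C γ * f ^ a) * π M = 0 := by
    rw [← map_mul, ← map_add]
    exact Ideal.Quotient.mk_singleton_self _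
  obtain ⟨u, v, huv⟩ := (hfM.pow_left : IsCoprime (f ^ b) M)
  have huv' : π u * π (f ^ b) + π v * π M = 1 := by
    rw [← map_mul, ← map_mul, ← map_add, huv, map_one]
  apply le_antisymm <;> rw [Ideal.span_singleton_le_span_singleton]
  · exact ⟨-π M, by linear_combination hg⟩
  · exact ⟨π u * π (C γ * f ^ a) - π v,
      by linear_combination (-π (C γ * f ^ a)) * huv' + π v * hg⟩

variable {γ f M}

theorem dvd_pow_two_mul_sub (hγ2 : γ ^ 2 = 0) {a b : ℕ} (hab : a ≤ b) :
    f ^ b + C γ * f ^ a * M ∣ f ^ (2 * b - a) := by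
  obtain ⟨k, rfl⟩ := Nat.exists_eq_add_of_le hab
  have hCγ2 : (C γ : R[X]) ^ 2 = 0 := by rw [← C_pow, hγ2, C_0]
  refine ⟨f ^ k - C γ * M, ?_⟩
  have hexp : 2 * (a + k) - a = a + k + k := by omega
  rw [hexp]
  linear_combination f ^ a * M ^ 2 * hCγ2

theorem not_dvd_pow_two_mul_sub_sub_one (hf : f.Monic) (hγ2 : γ ^ 2 = 0)
    (hann : ∀ x : R, γ * x = 0 → γ ∣ x)
    (hfi : ¬ IsUnit (f.map (Ideal.Quotient.mk (Ideal.span {γ})))) (hfM : IsCoprime f M)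
    {a b : ℕ} (hab : a < b) : ¬ f ^ b + C γ * f ^ a * M ∣ f ^ (2 * b - a - 1) := by
  rintro ⟨q, hq⟩
  obtain ⟨k, rfl⟩ := Nat.exists_eq_add_of_lt hab
  have hfMbar := hfM.map (mapRingHom (Ideal.Quotient.mk (Ideal.span {γ})))
  refine hfi (hfMbar.isUnit_of_dvd' dvd_rfl
    (map_dvd_map_of_pow_add_C_mul_dvd hf hγ2 hann (k := k) ⟨q, ?_⟩))
  refine (hf.pow a).isRegular.left (show f ^ a * _ = f ^ a * _ from ?_)
  calc f ^ a * f ^ (2 * k + 1) = f ^ (2 * (a + k + 1) - a - 1) := by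
        rw [← pow_add]; congr 1; omega
    _ = f ^ a * ((f ^ (k + 1) + C γ * M) * q) := by rw [hq]; ring

theorem isLeast_pow_mk_eq_zero (hf : f.Monic) (hγ2 : γ ^ 2 = 0)
    (hann : ∀ x : R, γ * x = 0 → γ ∣ x)
    (hfi : ¬ IsUnit (f.map (Ideal.Quotient.mk (Ideal.span {γ})))) (hfM : IsCoprime f M)
    {a b : ℕ} (hab : a < b) :
    IsLeast {N : ℕ | 0 < N ∧
        (Ideal.Quotient.mk (Ideal.span {f ^ b + C γ * f ^ a * M}) f) ^ N = 0} (2 * b - a) := by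
  refine isLeast_pow_eq_zero_s2 (by omega) ?_ ?_ <;>
    simp only [← map_pow, ne_eq, Ideal.Quotient.eq_zero_iff_mem, Ideal.mem_span_singleton]
  · exact dvd_pow_two_mul_sub hγ2 hab.le
  · exact not_dvd_pow_two_mul_sub_sub_one hf hγ2 hann hfi hfM hab

end

theorem stmt2_general {R : Type} [CommRing R]
    (p s : ℕ) (hp : p.Prime) (hs : 0 < s)
    (γ : R) (hγ : γ ≠ 0) (hγ2 : γ ^ 2 = 0)
    (hmax : ∀ a : R, a ∈ Ideal.span {γ} ↔ ¬ IsUnit a)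
    (f M : R[X]) (hf : f.Monic)
    (hfi : Irreducible (f.map (Ideal.Quotient.mk (Ideal.span {γ}))))
    (hfM : IsCoprime f M) :
    Ideal.span {Ideal.Quotient.mk (Ideal.span {f ^ p ^ s + C γ * f ^ p ^ (s - 1) * M})
        (f ^ p ^ s)} =
      Ideal.span {Ideal.Quotient.mk (Ideal.span {f ^ p ^ s + C γ * f ^ p ^ (s - 1) * M})
        (C γ * f ^ p ^ (s - 1))} ∧
    IsLeast {N : ℕ | 0 < N ∧
        (Ideal.Quotient.mk (Ideal.span {f ^ p ^ s + C γ * f ^ p ^ (s - 1) * M}) f) ^ N = 0}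
      (2 * p ^ s - p ^ (s - 1)) := by
  have hann : ∀ x : R, γ * x = 0 → γ ∣ x := fun x hx => by
    rw [← Ideal.mem_span_singleton, hmax]
    exact fun hu => hγ (hu.mul_left_eq_zero.mp hx)
  have hab : p ^ (s - 1) < p ^ s := Nat.pow_lt_pow_right hp.one_lt (by omega)
  exact ⟨span_mk_pow_eq_span_mk_C_mul_pow γ f M hfM _ _,
    isLeast_pow_mk_eq_zero hf hγ2 hann hfi.not_isUnit hfM hab⟩

/-- in `K = R[x]/⟨f^{p^s} + γ f^{p^{s-1}} M⟩` (with `M` coprime to the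
monic basic irreducible `f`), the ideals `⟨f^{p^s}⟩` and `⟨γ f^{p^{s-1}}⟩` coincide,
and the nilpotency index of `f` in `K` is `2p^s − p^{s-1}`. -/
theorem stmt2 {R : Type} [CommRing R] [Finite R]
    (p m s n : ℕ) (hp : p.Prime) (hm : 0 < m) (hs : 0 < s) (hn : 0 < n)
    (hnp : Nat.gcd n p = 1)
    (γ : R) (hγ : γ ≠ 0) (hγ2 : γ ^ 2 = 0)
    (hmax : ∀ a : R, a ∈ Ideal.span {γ} ↔ ¬ IsUnit a)
    (hres : Nat.card (R ⧸ Ideal.span {γ}) = p ^ m)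
    (f M : R[X]) (hf : f.Monic)
    (hfi : Irreducible (f.map (Ideal.Quotient.mk (Ideal.span {γ}))))
    (hfM : IsCoprime f M) :
    Ideal.span {Ideal.Quotient.mk (Ideal.span {f ^ p ^ s + C γ * f ^ p ^ (s - 1) * M})
        (f ^ p ^ s)} =
      Ideal.span {Ideal.Quotient.mk (Ideal.span {f ^ p ^ s + C γ * f ^ p ^ (s - 1) * M})
        (C γ * f ^ p ^ (s - 1))} ∧
    IsLeast {N : ℕ | 0 < N ∧
        (Ideal.Quotient.mk (Ideal.span {f ^ p ^ s + C γ * f ^ p ^ (s - 1) * M}) f) ^ N = 0}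
      (2 * p ^ s - p ^ (s - 1)) :=
  stmt2_general p s hp hs γ hγ hγ2 hmax f M hf hfi hfM
end

section
/- Let f ∈ R[x] be a monic basic irreducible polynomial of degree d, and let g ∈ R[x] be coprime to f in R[x] with deg g < d·p^s. Set K = R[x]/⟨f^{p^s} + γg⟩. Then K is a finite commutative chain ring: its ideals are exactly ⟨f^ν⟩ for 0 ≤ ν ≤ 2p^s, these form a strictly decreasing chain K = ⟨f^0⟩ ⊋ ⟨f⟩ ⊋ ⟨f²⟩ ⊋ ⋯ ⊋ ⟨f^{2p^s−1}⟩ ⊋ ⟨f^{2p^s}⟩ = {0}, and for each 0 ≤ ν ≤ 2p^s the ideal ⟨f^ν⟩ has exactly p^{md(2p^s − ν)} elements. -/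
open Polynomial

/-!
In `K = R[x]/⟨F⟩`, `F = f^{p^s} + γg`, the image `t` of `f` is nilpotent, since
`f^{2p^s} = F (F - 2γg)` as `γ² = 0`. Modulo `f` we have `F ≡ γg` with `g` a unit, so
`K/⟨t⟩ ≅ (R/⟨γ⟩)[x]/⟨f̄⟩`, a field with `p^{md}` elements, and `⟨t⟩` is the maximal ideal.
Hence every element of `K` is a unit times a power of `t`, and the ideals are the `⟨t^ν⟩`.
Each quotient `⟨t^ν⟩/⟨t^{ν+1}⟩` is an image of `K/⟨t⟩`, so has at most `p^{md}` elements,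
while `|K| = |R|^{dp^s} = p^{2mdp^s}` forces equality at every step.
-/

section ChainRing

variable {A : Type*} [CommRing A] {t : A} {N : ℕ}

instance Ideal.Quotient.finite_of_finite [Finite A] (I : Ideal A) : Finite (A ⧸ I) :=
  Finite.of_surjective _ Ideal.Quotient.mk_surjective

theorem isUnit_of_notMem_span_singleton (hmax : (Ideal.span {t}).IsMaximal) (htN : t ^ N = 0)
    {u : A} (hu : u ∉ Ideal.span {t}) : IsUnit u := by
  by_contra hnu
  obtain ⟨M, hM, huM⟩ := exists_max_ideal_of_mem_nonunits hnu
  have htM : t ∈ M := hM.isPrime.mem_of_pow_mem N (htN ▸ M.zero_mem)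
  have hM_eq : Ideal.span {t} = M :=
    hmax.eq_of_le hM.ne_top ((Ideal.span_singleton_le_iff_mem M).mpr htM)
  exact hu (hM_eq ▸ huM)

theorem exists_isUnit_mul_pow (hunit : ∀ u ∉ Ideal.span {t}, IsUnit u) (htN : t ^ N = 0)
    (x : A) : ∃ u k, IsUnit u ∧ x = u * t ^ k := by
  -- induction on the distance `i` from the exponent `j` to the nilpotency bound `N`
  suffices ∀ i j (y : A), N ≤ i + j → ∃ u k, IsUnit u ∧ y * t ^ j = u * t ^ k by
    simpa using this N 0 x le_rfl
  intro i
  induction i with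
  | zero =>
    intro j y hj
    exact ⟨1, N, isUnit_one, by rw [htN, pow_eq_zero_of_le (by omega) htN, mul_zero, mul_zero]⟩
  | succ i ih =>
    intro j y hj
    by_cases hy : y ∈ Ideal.span {t}
    · obtain ⟨z, rfl⟩ := Ideal.mem_span_singleton'.mp hy
      obtain ⟨u, k, hu, h⟩ := ih (j + 1) z (by omega)
      exact ⟨u, k, hu, by rw [← h]; ring⟩
    · exact ⟨y, j, hunit y hy, rfl⟩

theorem exists_eq_span_pow (hunit : ∀ u ∉ Ideal.span {t}, IsUnit u) (htN : t ^ N = 0)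
    (I : Ideal A) : ∃ ν ≤ N, I = Ideal.span {t ^ ν} := by
  classical
  have hmem : t ^ N ∈ I := htN ▸ I.zero_mem
  have hex : ∃ ν, t ^ ν ∈ I := ⟨N, hmem⟩
  refine ⟨Nat.find hex, Nat.find_min' hex hmem, le_antisymm ?_
    ((Ideal.span_singleton_le_iff_mem I).mpr (Nat.find_spec hex))⟩
  intro x hx
  obtain ⟨u, k, hu, rfl⟩ := exists_isUnit_mul_pow hunit htN x
  have hk : t ^ k ∈ I := (Ideal.unit_mul_mem_iff_mem I hu).mp hx
  exact Ideal.mul_mem_left _ _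
    (Ideal.mem_span_singleton.mpr (pow_dvd_pow t (Nat.find_min' hex hk)))

theorem index_span_pow_add_le [Finite A] (k j : ℕ) :
    (Ideal.span {t ^ (k + j)}).toAddSubgroup.index ≤
      (Ideal.span {t}).toAddSubgroup.index ^ j * (Ideal.span {t ^ k}).toAddSubgroup.index := by
  induction j with
  | zero => simp
  | succ j ih =>
    have h := Submodule.index_smul_le (Ideal.span {t}) {t ^ (k + j)}
      (by rw [Finset.coe_singleton])
    rw [Ideal.smul_eq_mul, Ideal.span_singleton_mul_span_singleton, ← pow_succ',
      Finset.card_singleton, pow_one] at h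
    calc _ ≤ _ := h
      _ ≤ _ := Nat.mul_le_mul_left _ ih
      _ = _ := by ring

theorem card_span_pow [Finite A] (htN : t ^ N = 0)
    (hcard : Nat.card A = Nat.card (A ⧸ Ideal.span {t}) ^ N) {k : ℕ} (hk : k ≤ N) :
    Nat.card (Ideal.span {t ^ k}) = Nat.card (A ⧸ Ideal.span {t}) ^ (N - k) := by
  set P := Nat.card (A ⧸ Ideal.span {t})
  have hP : 0 < P := Nat.card_pos
  have hPi : (Ideal.span {t}).toAddSubgroup.index = P := rfl
  have hupper : (Ideal.span {t ^ k}).toAddSubgroup.index ≤ P ^ k := by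
    simpa [hPi] using index_span_pow_add_le (t := t) 0 k
  have hlower : P ^ N ≤ P ^ (N - k) * (Ideal.span {t ^ k}).toAddSubgroup.index := by
    have h := index_span_pow_add_le (t := t) k (N - k)
    rwa [Nat.add_sub_cancel' hk, htN, Ideal.span_singleton_eq_bot.mpr rfl,
      Submodule.bot_toAddSubgroup, AddSubgroup.index_bot, hcard, hPi] at h
  have hindex : (Ideal.span {t ^ k}).toAddSubgroup.index = P ^ k := by
    refine le_antisymm hupper (Nat.le_of_mul_le_mul_left ?_ (pow_pos hP (N - k)))
    rwa [← pow_add, Nat.sub_add_cancel hk]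
  have h := AddSubgroup.card_mul_index (Ideal.span {t ^ k}).toAddSubgroup
  rw [hindex, hcard, ← pow_sub_mul_pow P hk] at h
  exact Nat.eq_of_mul_eq_mul_right (pow_pos hP k) h

theorem span_pow_le_span_pow {a b : ℕ} (h : a ≤ b) :
    Ideal.span {t ^ b} ≤ Ideal.span {t ^ a} :=
  Ideal.span_singleton_le_span_singleton.mpr (pow_dvd_pow t h)

theorem span_pow_chain_of_isMaximal_span [Finite A] (hmax : (Ideal.span {t}).IsMaximal)
    (htN : t ^ N = 0) (hcard : Nat.card A = Nat.card (A ⧸ Ideal.span {t}) ^ N) :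
    (∀ I J : Ideal A, I ≤ J ∨ J ≤ I) ∧
    (∀ I : Ideal A, ∃ ν ≤ N, I = Ideal.span {t ^ ν}) ∧
    (∀ ν < N, Ideal.span {t ^ (ν + 1)} < Ideal.span {t ^ ν}) ∧
    Ideal.span {t ^ N} = ⊥ ∧ Ideal.span {t ^ 0} = ⊤ ∧
    ∀ ν ≤ N, Nat.card (Ideal.span {t ^ ν}) = Nat.card (A ⧸ Ideal.span {t}) ^ (N - ν) := by
  have hideal := exists_eq_span_pow (fun _ => isUnit_of_notMem_span_singleton hmax htN) htN
  have hP : 1 < Nat.card (A ⧸ Ideal.span {t}) :=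
    have := Ideal.Quotient.nontrivial_iff.mpr hmax.ne_top
    Finite.one_lt_card
  refine ⟨fun I J => ?_, hideal, fun ν hν => ?_, by simp [htN], by simp,
    fun ν hν => card_span_pow htN hcard hν⟩
  · obtain ⟨a, -, rfl⟩ := hideal I
    obtain ⟨b, -, rfl⟩ := hideal J
    exact (le_total b a).imp span_pow_le_span_pow span_pow_le_span_pow
  · refine lt_of_le_of_ne (span_pow_le_span_pow ν.le_succ) fun heq => ?_
    have hcards := card_span_pow htN hcard (k := ν + 1) hν
    rw [heq, card_span_pow htN hcard hν.le] at hcards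
    have := Nat.pow_right_injective hP hcards
    omega

end ChainRing

theorem card_quotient_span_monic {A : Type*} [CommRing A] {q : A[X]} (hq : q.Monic) :
    Nat.card (A[X] ⧸ Ideal.span {q}) = Nat.card A ^ q.natDegree := by
  change Nat.card (AdjoinRoot q) = _
  rw [Nat.card_congr (AdjoinRoot.powerBasis' hq).basis.equivFun.toEquiv, Nat.card_fun]
  simp

section Residue

variable {R : Type*} [CommRing R]

theorem Ideal.isMaximal_of_mem_iff_not_isUnit {I : Ideal R} (h : ∀ a, a ∈ I ↔ ¬IsUnit a) :
    I.IsMaximal := by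
  rw [Ideal.isMaximal_iff]
  refine ⟨fun h1 => (h 1).mp h1 isUnit_one, fun J x _ hx hxJ => ?_⟩
  exact (Ideal.eq_top_iff_one J).mp (J.eq_top_of_isUnit_mem hxJ (not_not.mp (mt (h x).mpr hx)))

theorem mul_eq_zero_iff_mem_span_singleton {γ : R} (hγ : γ ≠ 0) (hγ2 : γ ^ 2 = 0)
    (hmax : ∀ a, a ∈ Ideal.span {γ} ↔ ¬IsUnit a) (x : R) :
    x * γ = 0 ↔ x ∈ Ideal.span {γ} := by
  refine ⟨fun h => (hmax x).mpr fun hx => hγ (hx.mul_right_eq_zero.mp h), fun h => ?_⟩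
  obtain ⟨a, rfl⟩ := Ideal.mem_span_singleton'.mp h
  rw [mul_assoc, ← sq, hγ2, mul_zero]

theorem card_eq_card_quotient_sq {γ : R} (hann : ∀ x, x * γ = 0 ↔ x ∈ Ideal.span {γ}) :
    Nat.card R = Nat.card (R ⧸ Ideal.span {γ}) ^ 2 := by
  let φ := LinearMap.toSpanSingleton R R γ
  have hker : LinearMap.ker φ = Ideal.span {γ} := by ext x; exact hann x
  have hrange : LinearMap.range φ = Ideal.span {γ} :=
    (LinearMap.span_singleton_eq_range R R γ).symm
  let e : (R ⧸ Ideal.span {γ}) ≃ₗ[R] Ideal.span {γ} :=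
    (Submodule.quotEquivOfEq _ _ hker.symm).trans
      (φ.quotKerEquivRange.trans (LinearEquiv.ofEq _ _ hrange))
  rw [Submodule.card_eq_card_quotient_mul_card (Ideal.span {γ}), ← Nat.card_congr e.toEquiv, sq]

noncomputable def quotientSpanMkEquiv (I : Ideal R) {f F : R[X]}
    (h : Ideal.span {AdjoinRoot.mk f F} = I.map (AdjoinRoot.of f)) :
    (R[X] ⧸ Ideal.span {F}) ⧸ Ideal.span {Ideal.Quotient.mk (Ideal.span {F}) f} ≃+*
      (R ⧸ I)[X] ⧸ Ideal.span {f.map (Ideal.Quotient.mk I)} :=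
  (Ideal.quotEquivOfEq (by rw [Ideal.map_span, Set.image_singleton])).trans <|
    (DoubleQuot.quotQuotEquivComm (Ideal.span {F}) (Ideal.span {f})).trans <|
      (Ideal.quotEquivOfEq (I := (Ideal.span {F}).map (AdjoinRoot.mk f))
        (by rw [Ideal.map_span, Set.image_singleton]; exact h)).trans
        (AdjoinRoot.quotAdjoinRootEquivQuotPolynomialQuot I f)

theorem isMaximal_span_mk (I : Ideal R) [I.IsMaximal] {f F : R[X]}
    (h : Ideal.span {AdjoinRoot.mk f F} = I.map (AdjoinRoot.of f))
    (hfi : Irreducible (f.map (Ideal.Quotient.mk I))) :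
    (Ideal.span {Ideal.Quotient.mk (Ideal.span {F}) f}).IsMaximal := by
  let := Ideal.Quotient.field I
  have := PrincipalIdealRing.isMaximal_of_irreducible hfi
  let := Ideal.Quotient.field (Ideal.span {f.map (Ideal.Quotient.mk I)})
  exact Ideal.Quotient.maximal_of_isField _
    ((quotientSpanMkEquiv I h).toMulEquiv.isField (Field.toIsField _))

theorem card_quotient_span_mk (I : Ideal R) [I.IsMaximal] {f F : R[X]}
    (h : Ideal.span {AdjoinRoot.mk f F} = I.map (AdjoinRoot.of f)) (hf : f.Monic) :
    Nat.card ((R[X] ⧸ Ideal.span {F}) ⧸ Ideal.span {Ideal.Quotient.mk (Ideal.span {F}) f}) =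
      Nat.card (R ⧸ I) ^ f.natDegree := by
  have := Ideal.Quotient.nontrivial_iff.mpr (Ideal.IsMaximal.ne_top ‹_›)
  rw [Nat.card_congr (quotientSpanMkEquiv I h).toEquiv, card_quotient_span_monic (hf.map _),
    hf.natDegree_map]

variable {f g : R[X]} {γ : R} {e : ℕ}

theorem span_mk_pow_add_C_mul (hfg : IsCoprime f g) (he : e ≠ 0) :
    Ideal.span {AdjoinRoot.mk f (f ^ e + C γ * g)} = (Ideal.span {γ}).map (AdjoinRoot.of f) := by
  obtain ⟨a, b, hab⟩ := hfg
  have hg : IsUnit (AdjoinRoot.mk f g) := IsUnit.of_mul_eq_one (AdjoinRoot.mk f b) <| by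
    rw [← map_mul, ← map_one (AdjoinRoot.mk f), ← hab, AdjoinRoot.mk_eq_mk]
    exact ⟨-a, by ring⟩
  rw [map_add, map_pow, AdjoinRoot.mk_self, zero_pow he, zero_add, map_mul, AdjoinRoot.mk_C,
    Ideal.span_singleton_mul_right_unit hg, Ideal.map_span, Set.image_singleton]

theorem pow_two_mul_mem_span_pow_add_C_mul (hγ2 : γ ^ 2 = 0) :
    f ^ (2 * e) ∈ Ideal.span {f ^ e + C γ * g} := by
  refine Ideal.mem_span_singleton'.mpr ⟨f ^ e - C γ * g, ?_⟩
  have hC2 : C γ ^ 2 = 0 := by rw [← map_pow, hγ2, map_zero]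
  rw [pow_mul']
  linear_combination (-g ^ 2) * hC2

theorem monic_pow_add_C_mul [Nontrivial R] (hf : f.Monic)
    (hg : g.degree < (f.natDegree * e : ℕ)) :
    (f ^ e + C γ * g).Monic ∧ (f ^ e + C γ * g).natDegree = f.natDegree * e := by
  have hlt : (C γ * g).degree < (f ^ e).degree := by
    rw [degree_eq_natDegree (hf.pow e).ne_zero, hf.natDegree_pow, mul_comm e, ← smul_eq_C_mul]
    exact (degree_smul_le γ g).trans_lt hg
  refine ⟨(hf.pow e).add_of_left hlt, ?_⟩
  rw [natDegree_add_eq_left_of_degree_lt hlt, hf.natDegree_pow, mul_comm]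

end Residue

theorem stmt3_general {R : Type} [CommRing R] [Finite R]
    (p m s : ℕ) (hp : p.Prime)
    (γ : R) (hγ : γ ≠ 0) (hγ2 : γ ^ 2 = 0)
    (hmax : ∀ a : R, a ∈ Ideal.span {γ} ↔ ¬ IsUnit a)
    (hres : Nat.card (R ⧸ Ideal.span {γ}) = p ^ m)
    (d : ℕ) (f g : R[X]) (hf : f.Monic) (hd : f.natDegree = d)
    (hfi : Irreducible (f.map (Ideal.Quotient.mk (Ideal.span {γ}))))
    (hfg : IsCoprime f g) (hdeg : g.degree < ((d * p ^ s : ℕ) : WithBot ℕ)) :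
    (∀ I J : Ideal (R[X] ⧸ Ideal.span {f ^ p ^ s + C γ * g}), I ≤ J ∨ J ≤ I) ∧
    (∀ I : Ideal (R[X] ⧸ Ideal.span {f ^ p ^ s + C γ * g}),
      ∃ ν ≤ 2 * p ^ s,
        I = Ideal.span {Ideal.Quotient.mk (Ideal.span {f ^ p ^ s + C γ * g}) (f ^ ν)}) ∧
    (∀ ν < 2 * p ^ s,
      Ideal.span {Ideal.Quotient.mk (Ideal.span {f ^ p ^ s + C γ * g}) (f ^ (ν + 1))} <
        Ideal.span {Ideal.Quotient.mk (Ideal.span {f ^ p ^ s + C γ * g}) (f ^ ν)}) ∧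
    Ideal.span {Ideal.Quotient.mk (Ideal.span {f ^ p ^ s + C γ * g}) (f ^ (2 * p ^ s))} =
      (⊥ : Ideal (R[X] ⧸ Ideal.span {f ^ p ^ s + C γ * g})) ∧
    Ideal.span {Ideal.Quotient.mk (Ideal.span {f ^ p ^ s + C γ * g}) (f ^ 0)} =
      (⊤ : Ideal (R[X] ⧸ Ideal.span {f ^ p ^ s + C γ * g})) ∧
    (∀ ν ≤ 2 * p ^ s,
      Nat.card
          ↥(Ideal.span {Ideal.Quotient.mk (Ideal.span {f ^ p ^ s + C γ * g}) (f ^ ν)}) =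
        p ^ (m * d * (2 * p ^ s - ν))) := by
  subst hd
  have : Nontrivial R := nontrivial_of_ne γ 0 hγ
  have := Ideal.isMaximal_of_mem_iff_not_isUnit hmax
  obtain ⟨hFm, hFdeg⟩ := monic_pow_add_C_mul (γ := γ) hf hdeg
  set F := f ^ p ^ s + C γ * g
  have : Finite (R[X] ⧸ Ideal.span {F}) := Nat.finite_of_card_ne_zero <| by
    rw [card_quotient_span_monic hFm]; exact pow_ne_zero _ Nat.card_pos.ne'
  set t := Ideal.Quotient.mk (Ideal.span {F}) f
  have htN : t ^ (2 * p ^ s) = 0 := by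
    rw [← map_pow, Ideal.Quotient.eq_zero_iff_mem]
    exact pow_two_mul_mem_span_pow_add_C_mul hγ2
  have hspan := span_mk_pow_add_C_mul (γ := γ) hfg (pow_ne_zero s hp.ne_zero)
  have hres_t : Nat.card ((R[X] ⧸ Ideal.span {F}) ⧸ Ideal.span {t}) = p ^ (m * f.natDegree) := by
    rw [card_quotient_span_mk _ hspan hf, hres, pow_mul]
  have hcard : Nat.card (R[X] ⧸ Ideal.span {F}) =
      Nat.card ((R[X] ⧸ Ideal.span {F}) ⧸ Ideal.span {t}) ^ (2 * p ^ s) := by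
    rw [hres_t, card_quotient_span_monic hFm, hFdeg,
      card_eq_card_quotient_sq (mul_eq_zero_iff_mem_span_singleton hγ hγ2 hmax), hres]
    ring
  have hchain := span_pow_chain_of_isMaximal_span (t := t) (isMaximal_span_mk _ hspan hfi) htN hcard
  simp only [hres_t, ← pow_mul] at hchain
  simpa only [map_pow] using hchain

/-- `K = R[x]/⟨f^{p^s} + γ g⟩` is a finite commutative chain ring whose
ideals are exactly the `⟨f^ν⟩` for `0 ≤ ν ≤ 2p^s`, forming a strictly decreasing chain,
and `⟨f^ν⟩` has exactly `p^{md(2p^s − ν)}` elements. -/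
theorem stmt3 {R : Type} [CommRing R] [Finite R]
    (p m s n : ℕ) (hp : p.Prime) (hm : 0 < m) (hs : 0 < s) (hn : 0 < n)
    (hnp : Nat.gcd n p = 1)
    (γ : R) (hγ : γ ≠ 0) (hγ2 : γ ^ 2 = 0)
    (hmax : ∀ a : R, a ∈ Ideal.span {γ} ↔ ¬ IsUnit a)
    (hres : Nat.card (R ⧸ Ideal.span {γ}) = p ^ m)
    (d : ℕ) (f g : R[X]) (hf : f.Monic) (hd : f.natDegree = d)
    (hfi : Irreducible (f.map (Ideal.Quotient.mk (Ideal.span {γ}))))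
    (hfg : IsCoprime f g) (hdeg : g.degree < ((d * p ^ s : ℕ) : WithBot ℕ)) :
    (∀ I J : Ideal (R[X] ⧸ Ideal.span {f ^ p ^ s + C γ * g}), I ≤ J ∨ J ≤ I) ∧
    (∀ I : Ideal (R[X] ⧸ Ideal.span {f ^ p ^ s + C γ * g}),
      ∃ ν ≤ 2 * p ^ s,
        I = Ideal.span {Ideal.Quotient.mk (Ideal.span {f ^ p ^ s + C γ * g}) (f ^ ν)}) ∧
    (∀ ν < 2 * p ^ s,
      Ideal.span {Ideal.Quotient.mk (Ideal.span {f ^ p ^ s + C γ * g}) (f ^ (ν + 1))} <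
        Ideal.span {Ideal.Quotient.mk (Ideal.span {f ^ p ^ s + C γ * g}) (f ^ ν)}) ∧
    Ideal.span {Ideal.Quotient.mk (Ideal.span {f ^ p ^ s + C γ * g}) (f ^ (2 * p ^ s))} =
      (⊥ : Ideal (R[X] ⧸ Ideal.span {f ^ p ^ s + C γ * g})) ∧
    Ideal.span {Ideal.Quotient.mk (Ideal.span {f ^ p ^ s + C γ * g}) (f ^ 0)} =
      (⊤ : Ideal (R[X] ⧸ Ideal.span {f ^ p ^ s + C γ * g})) ∧
    (∀ ν ≤ 2 * p ^ s,
      Nat.card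
          ↥(Ideal.span {Ideal.Quotient.mk (Ideal.span {f ^ p ^ s + C γ * g}) (f ^ ν)}) =
        p ^ (m * d * (2 * p ^ s - ν))) :=
  stmt3_general p m s hp γ hγ hγ2 hmax hres d f g hf hd hfi hfg hdeg
end

section
/- Let f ∈ R[x] be a monic basic irreducible polynomial of degree d, and let g ∈ R[x] be coprime to f in R[x] with deg g < d·p^s. Set K = R[x]/⟨f^{p^s} + γg⟩. Then for every 0 ≤ ν ≤ 2p^s, the annihilator of the ideal ⟨f^ν⟩ of K (the set of a ∈ K with a·c = 0 for all c ∈ ⟨f^ν⟩) equals the ideal ⟨f^{2p^s − ν}⟩. -/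
open Polynomial

/-- in `K = R[x]/⟨f^{p^s} + γ g⟩`, the annihilator of the ideal `⟨f^ν⟩`
equals `⟨f^{2p^s − ν}⟩`, for every `0 ≤ ν ≤ 2p^s`. -/
theorem stmt4 {R : Type} [CommRing R] [Finite R]
    (p m s n : ℕ) (hp : p.Prime) (hm : 0 < m) (hs : 0 < s) (hn : 0 < n)
    (hnp : Nat.gcd n p = 1)
    (γ : R) (hγ : γ ≠ 0) (hγ2 : γ ^ 2 = 0)
    (hmax : ∀ a : R, a ∈ Ideal.span {γ} ↔ ¬ IsUnit a)
    (hres : Nat.card (R ⧸ Ideal.span {γ}) = p ^ m)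
    (d : ℕ) (f g : R[X]) (hf : f.Monic) (hd : f.natDegree = d)
    (hfi : Irreducible (f.map (Ideal.Quotient.mk (Ideal.span {γ}))))
    (hfg : IsCoprime f g) (hdeg : g.degree < ((d * p ^ s : ℕ) : WithBot ℕ)) :
    ∀ ν ≤ 2 * p ^ s, ∀ a : R[X] ⧸ Ideal.span {f ^ p ^ s + C γ * g},
      (∀ c ∈ Ideal.span {Ideal.Quotient.mk (Ideal.span {f ^ p ^ s + C γ * g}) (f ^ ν)},
          a * c = 0) ↔
        a ∈ Ideal.span
          {Ideal.Quotient.mk (Ideal.span {f ^ p ^ s + C γ * g}) (f ^ (2 * p ^ s - ν))} := by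
  classical
  haveI : Nontrivial R := nontrivial_of_ne γ 0 hγ
  have hMax : (Ideal.span {γ}).IsMaximal := by
    rw [Ideal.isMaximal_iff]
    refine ⟨fun h => ((hmax 1).mp h) isUnit_one, ?_⟩
    intro J x _ hxI hxJ
    have hux : IsUnit x := not_not.mp (fun h => hxI ((hmax x).mpr h))
    have := Ideal.eq_top_of_isUnit_mem J hxJ hux
    simp [this]
  letI : Field (R ⧸ Ideal.span {γ}) := Ideal.Quotient.field _
  have he1 : 1 ≤ p ^ s := Nat.one_le_pow _ _ hp.pos
  have hCγ2 : (C γ : R[X]) * C γ = 0 := by rw [← C_mul, ← sq, hγ2, C_0]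
  have hfe : f ^ (p ^ s - 1) * f = f ^ p ^ s := by
    rw [← pow_succ]; congr 1; omega
  -- helper: polynomials mapping to zero mod γ
  have hspanCγ : ∀ P : R[X], P.map (Ideal.Quotient.mk (Ideal.span {γ})) = 0 →
      ∃ t, P = C γ * t := by
    intro P hP
    have hm1 : P ∈ Ideal.map (C : R →+* R[X]) (Ideal.span {γ}) :=
      Ideal.mem_map_C_iff.mpr (fun n =>
        Ideal.Quotient.eq_zero_iff_mem.mp (by rw [← coeff_map, hP, coeff_zero]))
    rw [Ideal.map_span, Set.image_singleton] at hm1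
    obtain ⟨t, ht⟩ := Ideal.mem_span_singleton'.mp hm1
    exact ⟨t, by rw [← ht, mul_comm]⟩
  have hmap0 : ∀ P : R[X], C γ * P = 0 →
      P.map (Ideal.Quotient.mk (Ideal.span {γ})) = 0 := by
    intro P hP
    ext n
    rw [coeff_map, coeff_zero]
    refine Ideal.Quotient.eq_zero_iff_mem.mpr ((hmax _).mpr fun hu => hγ ?_)
    have h1 : γ * P.coeff n = 0 := by
      have := congrArg (fun Q : R[X] => Q.coeff n) hP
      simpa using this
    exact hu.mul_right_eq_zero.mp (by rwa [mul_comm] at h1)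
  set F : R[X] := f ^ p ^ s + C γ * g with hFdef
  set J : Ideal R[X] := Ideal.span {F} with hJdef
  have hFJ : Ideal.Quotient.mk J F = 0 :=
    Ideal.Quotient.eq_zero_iff_mem.mpr (by rw [hJdef]; exact Ideal.subset_span rfl)
  -- f^(2p^s) = 0 in K
  have hfF : f ^ p ^ s * f ^ p ^ s = F * (f ^ p ^ s - C γ * g) := by
    rw [hFdef]; linear_combination (g * g) * hCγ2
  have hnil : (Ideal.Quotient.mk J f) ^ (2 * p ^ s) = 0 := by
    rw [← map_pow, Ideal.Quotient.eq_zero_iff_mem, hJdef, Ideal.mem_span_singleton]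
    exact ⟨f ^ p ^ s - C γ * g, by rw [two_mul, pow_add, hfF]⟩
  -- f^(2p^s - 1) ≠ 0 in K
  have hBne : (Ideal.Quotient.mk J f) ^ (2 * p ^ s - 1) ≠ 0 := by
    intro h0
    rw [← map_pow, Ideal.Quotient.eq_zero_iff_mem, hJdef, Ideal.mem_span_singleton] at h0
    obtain ⟨h, hh⟩ := h0
    have hqmapF : F.map (Ideal.Quotient.mk (Ideal.span {γ}))
        = (f.map (Ideal.Quotient.mk (Ideal.span {γ}))) ^ p ^ s := by
      have hqγ : Ideal.Quotient.mk (Ideal.span {γ}) γ = 0 :=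
        Ideal.Quotient.eq_zero_iff_mem.mpr (Ideal.subset_span rfl)
      rw [hFdef]
      simp [Polynomial.map_add, Polynomial.map_mul, Polynomial.map_pow, hqγ]
    have hmapeq : (f.map (Ideal.Quotient.mk (Ideal.span {γ}))) ^ (2 * p ^ s - 1)
        = (f.map (Ideal.Quotient.mk (Ideal.span {γ}))) ^ p ^ s
          * (h.map (Ideal.Quotient.mk (Ideal.span {γ}))) := by
      have := congrArg (Polynomial.map (Ideal.Quotient.mk (Ideal.span {γ}))) hh
      rwa [Polynomial.map_pow, Polynomial.map_mul, hqmapF] at this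
    have hf0 : f.map (Ideal.Quotient.mk (Ideal.span {γ})) ≠ 0 :=
      (hf.map _).ne_zero
    have hh0 : h.map (Ideal.Quotient.mk (Ideal.span {γ}))
        = (f.map (Ideal.Quotient.mk (Ideal.span {γ}))) ^ (p ^ s - 1) := by
      refine mul_left_cancel₀ (pow_ne_zero (p ^ s) hf0) ?_
      rw [← hmapeq, ← pow_add]
      congr 1
      omega
    have hD0 : (h - f ^ (p ^ s - 1)).map (Ideal.Quotient.mk (Ideal.span {γ})) = 0 := by
      rw [Polynomial.map_sub, Polynomial.map_pow, hh0, sub_self]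
    obtain ⟨t, ht⟩ := hspanCγ _ hD0
    have hht : h = f ^ (p ^ s - 1) + C γ * t := by linear_combination ht
    have h2e1 : f ^ (2 * p ^ s - 1) = f ^ p ^ s * f ^ (p ^ s - 1) := by
      rw [← pow_add]; congr 1; omega
    have e1 : f ^ (2 * p ^ s - 1)
        = f ^ p ^ s * f ^ (p ^ s - 1) + C γ * g * f ^ (p ^ s - 1)
          + f ^ p ^ s * (C γ * t) := by
      rw [hh, hht, hFdef]; linear_combination (g * t) * hCγ2
    have e2 : C γ * g * f ^ (p ^ s - 1) + f ^ p ^ s * (C γ * t) = 0 := by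
      linear_combination h2e1 - e1
    have e3 : f ^ (p ^ s - 1) * (C γ * (g + f * t)) = 0 := by
      linear_combination e2 + (C γ * t) * hfe
    have e4 : C γ * (g + f * t) = 0 := ((hf.pow _).mul_right_eq_zero_iff).mp e3
    have e5 : (g + f * t).map (Ideal.Quotient.mk (Ideal.span {γ})) = 0 := hmap0 _ e4
    have hdvd : f.map (Ideal.Quotient.mk (Ideal.span {γ}))
        ∣ g.map (Ideal.Quotient.mk (Ideal.span {γ})) := by
      refine ⟨-(t.map (Ideal.Quotient.mk (Ideal.span {γ}))), ?_⟩
      have := e5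
      rw [Polynomial.map_add, Polynomial.map_mul] at this
      linear_combination this
    have hcop : IsCoprime (f.map (Ideal.Quotient.mk (Ideal.span {γ})))
        (g.map (Ideal.Quotient.mk (Ideal.span {γ}))) := by
      have := hfg.map (Polynomial.mapRingHom (Ideal.Quotient.mk (Ideal.span {γ})))
      simpa using this
    exact hfi.not_isUnit (hcop.isUnit_of_dvd' dvd_rfl hdvd)
  have hple : ∀ k : ℕ, (Ideal.Quotient.mk J f) ^ k = 0 → 2 * p ^ s ≤ k := by
    intro k hk
    by_contra hlt
    apply hBne
    have : (Ideal.Quotient.mk J f) ^ (2 * p ^ s - 1)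
        = (Ideal.Quotient.mk J f) ^ k * (Ideal.Quotient.mk J f) ^ (2 * p ^ s - 1 - k) := by
      rw [← pow_add]; congr 1; omega
    rw [this, hk, zero_mul]
  -- γ lies in the ideal generated by f in K
  have hγspan : Ideal.Quotient.mk J (C γ) ∈ Ideal.span {Ideal.Quotient.mk J f} := by
    obtain ⟨u, v, huv⟩ := hfg
    have hrep : C γ = (C γ * u - v * f ^ (p ^ s - 1)) * f + v * F := by
      rw [hFdef]; linear_combination (-C γ) * huv + v * hfe
    have h2 := congrArg (Ideal.Quotient.mk J) hrep
    simp only [map_add, map_mul, hFJ, mul_zero, add_zero] at h2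
    exact Ideal.mem_span_singleton'.mpr ⟨_, h2.symm⟩
  -- K is local: elements outside (f) are units
  have hunit : ∀ b : R[X] ⧸ J, b ∉ Ideal.span {Ideal.Quotient.mk J f} → IsUnit b := by
    intro b hb
    obtain ⟨B, rfl⟩ := Ideal.Quotient.mk_surjective b
    have hndvd : ¬ (f.map (Ideal.Quotient.mk (Ideal.span {γ}))
        ∣ B.map (Ideal.Quotient.mk (Ideal.span {γ}))) := by
      rintro ⟨c0, hc0⟩
      obtain ⟨c, rfl⟩ := Polynomial.map_surjective _ Ideal.Quotient.mk_surjective c0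
      have hz : (B - f * c).map (Ideal.Quotient.mk (Ideal.span {γ})) = 0 := by
        rw [Polynomial.map_sub, Polynomial.map_mul, ← hc0, sub_self]
      obtain ⟨t, ht⟩ := hspanCγ _ hz
      apply hb
      have hB : Ideal.Quotient.mk J B
          = Ideal.Quotient.mk J c * Ideal.Quotient.mk J f
            + Ideal.Quotient.mk J (C γ) * Ideal.Quotient.mk J t := by
        rw [← map_mul, ← map_mul, ← map_add]
        congr 1
        linear_combination ht
      rw [hB]
      exact Ideal.add_mem _
        (Ideal.mem_span_singleton'.mpr ⟨Ideal.Quotient.mk J c, rfl⟩)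
        (Ideal.mul_mem_right _ _ hγspan)
    have hcop : IsCoprime (f.map (Ideal.Quotient.mk (Ideal.span {γ})))
        (B.map (Ideal.Quotient.mk (Ideal.span {γ}))) :=
      hfi.coprime_iff_not_dvd.mpr hndvd
    obtain ⟨u0, v0, huv0⟩ := hcop
    obtain ⟨U, hU⟩ := Polynomial.map_surjective _ Ideal.Quotient.mk_surjective u0
    obtain ⟨V, hV⟩ := Polynomial.map_surjective _ Ideal.Quotient.mk_surjective v0
    have hz : (U * f + V * B - 1).map (Ideal.Quotient.mk (Ideal.span {γ})) = 0 := by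
      rw [Polynomial.map_sub, Polynomial.map_add, Polynomial.map_mul, Polynomial.map_mul,
        Polynomial.map_one, hU, hV]
      linear_combination huv0
    obtain ⟨t, ht⟩ := hspanCγ _ hz
    have hVB : Ideal.Quotient.mk J V * Ideal.Quotient.mk J B
        = 1 + (Ideal.Quotient.mk J (C γ) * Ideal.Quotient.mk J t
            - Ideal.Quotient.mk J U * Ideal.Quotient.mk J f) := by
      have := congrArg (Ideal.Quotient.mk J) ht
      simp only [map_sub, map_add, map_mul, map_one] at this
      linear_combination this
    have hzmem : Ideal.Quotient.mk J (C γ) * Ideal.Quotient.mk J t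
        - Ideal.Quotient.mk J U * Ideal.Quotient.mk J f
        ∈ Ideal.span {Ideal.Quotient.mk J f} := by
      refine sub_mem (Ideal.mul_mem_right _ _ hγspan) ?_
      exact Ideal.mul_mem_left _ _ (Ideal.subset_span rfl)
    obtain ⟨w, hw⟩ := Ideal.mem_span_singleton'.mp hzmem
    have hunit1 : IsUnit (Ideal.Quotient.mk J V * Ideal.Quotient.mk J B) := by
      rw [hVB]
      refine IsNilpotent.isUnit_one_add ⟨2 * p ^ s, ?_⟩
      rw [← hw, mul_pow, hnil, mul_zero]
    exact isUnit_of_mul_isUnit_right hunit1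
  -- decomposition: every nonzero element is unit * f^k
  have hdecomp : ∀ b : R[X] ⧸ J, b ≠ 0 →
      ∃ k ≤ 2 * p ^ s - 1, ∃ u : R[X] ⧸ J, IsUnit u
        ∧ b = u * (Ideal.Quotient.mk J f) ^ k := by
    intro b hb
    have hex : ∃ j, b ∉ Ideal.span {(Ideal.Quotient.mk J f) ^ j} := by
      refine ⟨2 * p ^ s, ?_⟩
      rw [hnil, Ideal.span_singleton_eq_bot.mpr rfl]
      simpa using hb
    have hk'spec : b ∉ Ideal.span {(Ideal.Quotient.mk J f) ^ Nat.find hex} :=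
      Nat.find_spec hex
    have hk'pos : 1 ≤ Nat.find hex := by
      refine Nat.one_le_iff_ne_zero.mpr fun h0 => hk'spec ?_
      rw [h0, pow_zero, Ideal.span_singleton_one]
      exact Submodule.mem_top
    have hk'le : Nat.find hex ≤ 2 * p ^ s := Nat.find_le (by
      rw [hnil, Ideal.span_singleton_eq_bot.mpr rfl]; simpa using hb)
    have hmem : b ∈ Ideal.span {(Ideal.Quotient.mk J f) ^ (Nat.find hex - 1)} :=
      not_not.mp (Nat.find_min hex (by omega))
    obtain ⟨c, hc⟩ := Ideal.mem_span_singleton'.mp hmem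
    have hpowsplit : (Ideal.Quotient.mk J f) ^ (Nat.find hex)
        = Ideal.Quotient.mk J f * (Ideal.Quotient.mk J f) ^ (Nat.find hex - 1) := by
      rw [← pow_succ']; congr 1; omega
    have hcu : IsUnit c := by
      refine hunit c fun hcmem => ?_
      obtain ⟨w, hw⟩ := Ideal.mem_span_singleton'.mp hcmem
      apply hk'spec
      refine Ideal.mem_span_singleton'.mpr ⟨w, ?_⟩
      rw [hpowsplit]
      calc w * (Ideal.Quotient.mk J f * (Ideal.Quotient.mk J f) ^ (Nat.find hex - 1))
          = w * Ideal.Quotient.mk J f * (Ideal.Quotient.mk J f) ^ (Nat.find hex - 1) := by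
            ring
        _ = c * (Ideal.Quotient.mk J f) ^ (Nat.find hex - 1) := by rw [hw]
        _ = b := hc
    exact ⟨Nat.find hex - 1, by omega, c, hcu, hc.symm⟩
  -- main argument
  intro ν hν a
  constructor
  · intro hann
    by_cases ha : a = 0
    · rw [ha]; exact Ideal.zero_mem _
    obtain ⟨k, hk, u, hu, rfl⟩ := hdecomp a ha
    have h1 : u * (Ideal.Quotient.mk J f) ^ k
        * Ideal.Quotient.mk J (f ^ ν) = 0 :=
      hann _ (Ideal.subset_span rfl)
    have h2 : (Ideal.Quotient.mk J f) ^ (k + ν) = 0 := by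
      refine hu.mul_right_eq_zero.mp ?_
      rw [pow_add, ← mul_assoc]
      rw [map_pow] at h1
      exact h1
    have h3 : 2 * p ^ s ≤ k + ν := hple _ h2
    refine Ideal.mem_span_singleton'.mpr
      ⟨u * (Ideal.Quotient.mk J f) ^ (k - (2 * p ^ s - ν)), ?_⟩
    rw [map_pow, mul_assoc, ← pow_add]
    congr 2
    omega
  · intro hmem c hc
    obtain ⟨x, hx⟩ := Ideal.mem_span_singleton'.mp hmem
    obtain ⟨y, hy⟩ := Ideal.mem_span_singleton'.mp hc
    have h0 : Ideal.Quotient.mk J (f ^ (2 * p ^ s - ν)) * Ideal.Quotient.mk J (f ^ ν) = 0 := by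
      rw [← map_mul, ← pow_add, show 2 * p ^ s - ν + ν = 2 * p ^ s from by omega,
        map_pow, hnil]
    rw [← hx, ← hy]
    linear_combination (x * y) * h0
end

section
/- Let α₀ be a unit of R such that x^n − α₀ is basic irreducible over R, let α = α₀^{p^s}, write f = x^n − α₀, and let K = R[x]/⟨x^{np^s} − α⟩. Then every ideal C of K is of one of the following forms: (I) C = {0} or C = K; (II) C = ⟨γ f^τ⟩ for some 0 ≤ τ < p^s; (III) C = ⟨f^ω + γ f^t G⟩ where 0 < ω < p^s, G is either 0 or a unit of K, and 0 ≤ t < ω when G ≠ 0; (IV) C = ⟨f^ω + γ f^t G, γ f^μ⟩ where 0 ≤ μ < ω < p^s, G is either 0 or a unit of K, and 0 ≤ t < μ when G ≠ 0. -/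
/-!
Reduction modulo `γ` maps `R[x]` onto `k[x]`, `k = R/⟨γ⟩`, with square-zero kernel `⟨γ⟩`, and
by Frobenius it sends `x^{np^s} - α₀^{p^s}` to `f̄^{p^s}`. The preimage `J` of an ideal of `K`
therefore reduces to an ideal `⟨f̄^ω⟩ ⊇ ⟨f̄^{p^s}⟩` of the principal ideal domain `k[x]`, and so
does its torsion part `(J : γ)`, to `⟨f̄^μ⟩` with `μ ≤ ω`. Lifting, `J = ⟨c, γ f^μ⟩` for any
`c ∈ J` reducing to `f̄^ω`. Writing `c = f^ω + γ h` and splitting off the largest power `f̄^t`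
of `f̄` dividing `h̄` when `t < μ` gives the normal form; the cofactor is a unit of `K`, being
coprime to `f̄` while `f` is nilpotent in `K`.
-/

open Polynomial

section Generic

variable {A : Type*} [CommRing A]

theorem span_pair_eq_span_singleton_of_mul_eq_zero {ε a b : A} (h : ε * b = 0) :
    Ideal.span {a + b, ε * a} = Ideal.span {a + b} := by
  refine le_antisymm (Ideal.span_le.mpr ?_)
    (Ideal.span_mono (Set.singleton_subset_iff.mpr (Set.mem_insert _ _)))
  rintro x (rfl | rfl)
  · exact Ideal.subset_span rfl
  · exact Ideal.mem_span_singleton'.mpr ⟨ε, by linear_combination h⟩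

theorem isUnit_of_mul_add_mul_eq_one_add {x y z a b : A} (hx : IsNilpotent x)
    (hz : IsNilpotent z) (h : a * x + b * y = 1 + z) : IsUnit y := by
  have hby : b * y = 1 + (z - a * x) := by linear_combination h
  have hax : IsNilpotent (a * x) := (Commute.all a x).isNilpotent_mul_left hx
  exact isUnit_of_mul_isUnit_right
    (hby ▸ ((Commute.all z _).isNilpotent_sub hz hax).isUnit_one_add)

theorem Ideal.isMaximal_of_forall_mem_iff_not_isUnit {I : Ideal A}
    (h : ∀ a, a ∈ I ↔ ¬IsUnit a) : I.IsMaximal := by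
  refine Ideal.isMaximal_iff.mpr ⟨fun h1 ↦ (h 1).mp h1 isUnit_one, fun J x _ hx hxJ ↦ ?_⟩
  obtain ⟨u, rfl⟩ := not_not.mp (mt (h x).mpr hx)
  simpa using J.mul_mem_left ↑u⁻¹ hxJ

end Generic

theorem pow_dvd_or_exists_eq_pow_mul {M : Type*} [CommMonoidWithZero M] [WfDvdMonoid M] {q : M}
    (hq : Irreducible q) (x : M) (μ : ℕ) :
    q ^ μ ∣ x ∨ ∃ t < μ, ∃ v, ¬q ∣ v ∧ x = q ^ t * v := by
  rcases eq_or_ne x 0 with rfl | hx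
  · exact Or.inl (dvd_zero _)
  obtain ⟨t, v, hv, rfl⟩ := WfDvdMonoid.max_power_factor hx hq
  rcases lt_or_ge t μ with ht | ht
  · exact Or.inr ⟨t, ht, v, hv, rfl⟩
  · exact Or.inl (dvd_mul_of_dvd_left (pow_dvd_pow q ht) v)

theorem exists_eq_span_pow_of_pow_mem {B : Type*} [CommRing B] [IsDomain B]
    [IsPrincipalIdealRing B] {q : B} (hq : Prime q) {I : Ideal B} {N : ℕ} (h : q ^ N ∈ I) :
    ∃ i ≤ N, I = Ideal.span {q ^ i} := by
  rw [← Ideal.span_singleton_generator I, Ideal.mem_span_singleton] at h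
  obtain ⟨i, hi, hassoc⟩ := (dvd_prime_pow hq N).mp h
  exact ⟨i, hi, (Ideal.span_singleton_generator I).symm.trans
    (Ideal.span_singleton_eq_span_singleton.mpr hassoc)⟩

theorem map_X_pow_mul_sub_C_pow {R k : Type*} [CommRing R] [CommRing k] (φ : R →+* k) {p : ℕ}
    [ExpChar k p] (n s : ℕ) (a : R) :
    (X ^ (n * p ^ s) - C (a ^ p ^ s)).map φ = ((X ^ n - C a).map φ) ^ p ^ s := by
  simp only [Polynomial.map_sub, Polynomial.map_pow, map_X, map_C, sub_pow_expChar_pow,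
    ← pow_mul, map_pow]

section Reduction

variable {A B : Type*} [CommRing A] [CommRing B] {ρ : A →+* B} {ε : A}

theorem exists_eq_add_mul_of_map_eq (hker : RingHom.ker ρ = Ideal.span {ε}) {a b : A}
    (h : ρ a = ρ b) : ∃ u, a = b + u * ε := by
  have hab := (RingHom.sub_mem_ker_iff ρ).mpr h
  rw [hker, Ideal.mem_span_singleton'] at hab
  obtain ⟨u, hu⟩ := hab
  exact ⟨u, by rw [hu]; ring⟩

theorem mul_eq_mul_of_map_eq (hker : RingHom.ker ρ = Ideal.span {ε}) (hε : ε ^ 2 = 0) {a b : A}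
    (h : ρ a = ρ b) : ε * a = ε * b := by
  obtain ⟨u, rfl⟩ := exists_eq_add_mul_of_map_eq hker h
  linear_combination u * hε

theorem le_span_pair_of_map_le_span (hρ : Function.Surjective ρ)
    (hker : RingHom.ker ρ = Ideal.span {ε}) {I : Ideal A} {a : A}
    (h : I.map ρ ≤ Ideal.span {ρ a}) : I ≤ Ideal.span {a, ε} := by
  rw [Ideal.span_insert, ← hker, ← Ideal.comap_map_of_surjective' ρ hρ, Ideal.map_span,
    Set.image_singleton]
  exact Ideal.map_le_iff_le_comap.mp h

theorem eq_span_pair_of_map_le_span (hρ : Function.Surjective ρ)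
    (hker : RingHom.ker ρ = Ideal.span {ε}) (hε : ε ^ 2 = 0) {J : Ideal A} {c e : A}
    (hc : c ∈ J) (he : ε * e ∈ J) (hJ : J.map ρ ≤ Ideal.span {ρ c})
    (hT : (J.colon {ε}).map ρ ≤ Ideal.span {ρ e}) : J = Ideal.span {c, ε * e} := by
  refine le_antisymm (fun d hd ↦ ?_) (Ideal.span_le.mpr ?_)
  · obtain ⟨q, u, rfl⟩ := Ideal.mem_span_pair.mp (le_span_pair_of_map_le_span hρ hker hJ hd)
    have hu : u ∈ J.colon {ε} := by
      rw [Submodule.mem_colon_singleton, smul_eq_mul]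
      simpa using J.sub_mem hd (J.mul_mem_left q hc)
    obtain ⟨r, v, rfl⟩ := Ideal.mem_span_pair.mp (le_span_pair_of_map_le_span hρ hker hT hu)
    exact Ideal.mem_span_pair.mpr ⟨q, r, by linear_combination -v * hε⟩
  · rintro x (rfl | rfl) <;> assumption

variable {f g : A} {N : ℕ}

theorem isNilpotent_mk_of_map_eq_pow (hker : RingHom.ker ρ = Ideal.span {ε}) (hε : ε ^ 2 = 0)
    (hg : ρ g = ρ f ^ N) : IsNilpotent (Ideal.Quotient.mk (Ideal.span {g}) f) := by
  obtain ⟨u, hu⟩ := exists_eq_add_mul_of_map_eq hker ((map_pow ρ f N).trans hg.symm)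
  -- `f ^ N = g + u ε` with `ε ^ 2 = 0`, so `f ^ (2N) = (g + 2 u ε) g`.
  refine ⟨N * 2, Ideal.Quotient.eq_zero_iff_mem.mpr (Ideal.mem_span_singleton'.mpr
    ⟨g + 2 * u * ε, ?_⟩)⟩
  change _ = f ^ (N * 2)
  rw [pow_mul, hu]
  linear_combination -u ^ 2 * hε

theorem isUnit_mk_of_not_dvd [IsPrincipalIdealRing B] (hρ : Function.Surjective ρ)
    (hker : RingHom.ker ρ = Ideal.span {ε}) (hε : ε ^ 2 = 0) (hf : Irreducible (ρ f))
    (hg : ρ g = ρ f ^ N) {v : A} (hv : ¬ρ f ∣ ρ v) :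
    IsUnit (Ideal.Quotient.mk (Ideal.span {g}) v) := by
  obtain ⟨a', b', hab⟩ := hf.coprime_iff_not_dvd.mpr hv
  obtain ⟨a, rfl⟩ := hρ a'
  obtain ⟨b, rfl⟩ := hρ b'
  obtain ⟨w, hw⟩ := exists_eq_add_mul_of_map_eq hker (a := a * f + b * v) (b := 1)
    (by simpa using hab)
  have hwε : IsNilpotent (w * ε) := ⟨2, by linear_combination w ^ 2 * hε⟩
  set π := Ideal.Quotient.mk (Ideal.span {g})
  refine isUnit_of_mul_add_mul_eq_one_add (a := π a) (b := π b)
    (isNilpotent_mk_of_map_eq_pow hker hε hg) (hwε.map π) ?_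
  simpa only [map_add, map_mul, map_one] using congrArg π hw

theorem mul_eq_mul_pow_mul_or_exists_not_dvd [WfDvdMonoid B] (hρ : Function.Surjective ρ)
    (hker : RingHom.ker ρ = Ideal.span {ε}) (hε : ε ^ 2 = 0) (hf : Irreducible (ρ f))
    (h : A) (μ : ℕ) :
    (∃ w, ε * h = ε * f ^ μ * w) ∨ ∃ t < μ, ∃ v, ¬ρ f ∣ ρ v ∧ ε * h = ε * f ^ t * v := by
  rcases pow_dvd_or_exists_eq_pow_mul hf (ρ h) μ with ⟨w', hw'⟩ | ⟨t, ht, v', hv', hh⟩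
  · obtain ⟨w, rfl⟩ := hρ w'
    refine Or.inl ⟨w, ?_⟩
    rw [mul_assoc]
    exact mul_eq_mul_of_map_eq hker hε (by rw [hw', map_mul, map_pow])
  · obtain ⟨v, rfl⟩ := hρ v'
    refine Or.inr ⟨t, ht, v, hv', ?_⟩
    rw [mul_assoc]
    exact mul_eq_mul_of_map_eq hker hε (by rw [hh, map_mul, map_pow])

variable [IsDomain B] [IsPrincipalIdealRing B]

theorem exists_span_pair_eq_span_pow_add (hρ : Function.Surjective ρ)
    (hker : RingHom.ker ρ = Ideal.span {ε}) (hε : ε ^ 2 = 0) (hf : Irreducible (ρ f))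
    (hg : ρ g = ρ f ^ N) {c : A} {ω : ℕ} (μ : ℕ) (hc : ρ c = ρ f ^ ω) :
    ∃ (t : ℕ) (G : A ⧸ Ideal.span {g}), (G = 0 ∨ IsUnit G) ∧ (G ≠ 0 → t < μ) ∧
      Ideal.span {Ideal.Quotient.mk _ c, Ideal.Quotient.mk _ (ε * f ^ μ)} =
        Ideal.span {Ideal.Quotient.mk _ (f ^ ω) + Ideal.Quotient.mk _ (ε * f ^ t) * G,
          Ideal.Quotient.mk _ (ε * f ^ μ)} := by
  set π := Ideal.Quotient.mk (Ideal.span {g})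
  obtain ⟨h, rfl⟩ := exists_eq_add_mul_of_map_eq hker (hc.trans (map_pow ρ f ω).symm)
  rcases mul_eq_mul_pow_mul_or_exists_not_dvd hρ hker hε hf h μ with
    ⟨w, hw⟩ | ⟨t, ht, v, hv, hw⟩
  · refine ⟨0, 0, Or.inl rfl, fun h0 ↦ absurd rfl h0, ?_⟩
    rw [mul_comm h, hw, map_add, map_mul _ (ε * f ^ μ), mul_comm _ (π w),
      Ideal.span_pair_add_mul_right, mul_zero, add_zero]
  · refine ⟨t, π v, Or.inr (isUnit_mk_of_not_dvd hρ hker hε hf hg hv), fun _ ↦ ht, ?_⟩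
    rw [← map_mul, ← map_add, mul_comm h, hw]

theorem exists_eq_span_pair (hρ : Function.Surjective ρ) (hker : RingHom.ker ρ = Ideal.span {ε})
    (hε : ε ^ 2 = 0) (hf : Irreducible (ρ f)) (hg : ρ g = ρ f ^ N)
    (I : Ideal (A ⧸ Ideal.span {g})) :
    ∃ ω μ, μ ≤ ω ∧ ω ≤ N ∧ (I.comap (Ideal.Quotient.mk _)).map ρ = Ideal.span {ρ f ^ ω} ∧
      ∀ c ∈ I.comap (Ideal.Quotient.mk _), ρ c = ρ f ^ ω →
        I = Ideal.span {Ideal.Quotient.mk _ c, Ideal.Quotient.mk _ (ε * f ^ μ)} := by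
  set π := Ideal.Quotient.mk (Ideal.span {g})
  set J := I.comap π
  have hgJ : g ∈ J := by simp [J, π, I.zero_mem]
  obtain ⟨ω, hωN, hJ⟩ := exists_eq_span_pow_of_pow_mem hf.prime (hg ▸ J.mem_map_of_mem ρ hgJ)
  obtain ⟨μ, -, hT⟩ := exists_eq_span_pow_of_pow_mem hf.prime
    (hg ▸ (J.colon {ε}).mem_map_of_mem ρ (Ideal.le_colon hgJ))
  have hμω : μ ≤ ω := by
    have : ρ f ^ ω ∈ (J.colon {ε}).map ρ :=
      Ideal.map_mono Ideal.le_colon (hJ ▸ Ideal.mem_span_singleton_self _)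
    rwa [hT, Ideal.mem_span_singleton, pow_dvd_pow_iff hf.ne_zero hf.not_isUnit] at this
  have hfμ : ε * f ^ μ ∈ J := by
    obtain ⟨e, he, hρe⟩ := (Ideal.mem_map_iff_of_surjective ρ hρ).mp
      (hT ▸ Ideal.mem_span_singleton_self (ρ f ^ μ))
    rw [mul_eq_mul_of_map_eq hker hε ((map_pow ρ f μ).trans hρe.symm), mul_comm]
    simpa using Submodule.mem_colon_singleton.mp he
  refine ⟨ω, μ, hμω, hωN, hJ, fun c hc hρc ↦ ?_⟩
  have hJc := eq_span_pair_of_map_le_span hρ hker hε hc hfμ (by rw [hJ, hρc])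
    (by rw [hT, map_pow])
  calc I = J.map π := (Ideal.map_comap_of_surjective π Ideal.Quotient.mk_surjective I).symm
    _ = _ := by rw [hJc, Ideal.map_span, Set.image_pair]

theorem ideal_quotient_classification (hρ : Function.Surjective ρ)
    (hker : RingHom.ker ρ = Ideal.span {ε}) (hε : ε ^ 2 = 0) (hf : Irreducible (ρ f))
    (hg : ρ g = ρ f ^ N) (I : Ideal (A ⧸ Ideal.span {g})) :
    I = ⊥ ∨ I = ⊤ ∨
      (∃ τ, τ < N ∧ I = Ideal.span {Ideal.Quotient.mk _ (ε * f ^ τ)}) ∨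
      (∃ ω t : ℕ, ∃ G : A ⧸ Ideal.span {g},
        0 < ω ∧ ω < N ∧ (G = 0 ∨ IsUnit G) ∧ (G ≠ 0 → t < ω) ∧
        I = Ideal.span {Ideal.Quotient.mk _ (f ^ ω) + Ideal.Quotient.mk _ (ε * f ^ t) * G}) ∨
      (∃ ω t μ : ℕ, ∃ G : A ⧸ Ideal.span {g},
        μ < ω ∧ ω < N ∧ (G = 0 ∨ IsUnit G) ∧ (G ≠ 0 → t < μ) ∧
        I = Ideal.span {Ideal.Quotient.mk _ (f ^ ω) + Ideal.Quotient.mk _ (ε * f ^ t) * G,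
          Ideal.Quotient.mk _ (ε * f ^ μ)}) := by
  set π := Ideal.Quotient.mk (Ideal.span {g})
  obtain ⟨ω, μ, hμω, hωN, hJ, hI⟩ := exists_eq_span_pair hρ hker hε hf hg I
  rcases hωN.lt_or_eq with hωN | rfl
  · obtain ⟨c, hcI, hρc⟩ := (Ideal.mem_map_iff_of_surjective ρ hρ).mp
      (hJ ▸ Ideal.mem_span_singleton_self (ρ f ^ ω))
    rcases Nat.eq_zero_or_pos ω with rfl | hω
    · obtain ⟨u, rfl⟩ := exists_eq_add_mul_of_map_eq hker
        (hρc.trans ((pow_zero _).trans (map_one ρ).symm))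
      have huε : IsNilpotent (u * ε) := ⟨2, by linear_combination u ^ 2 * hε⟩
      exact Or.inr (Or.inl (I.eq_top_of_isUnit_mem hcI (huε.isUnit_one_add.map π)))
    obtain ⟨t, G, hG, ht, hspan⟩ := exists_span_pair_eq_span_pow_add hρ hker hε hf hg μ hρc
    rw [hI c hcI hρc, hspan]
    rcases hμω.lt_or_eq with hμω | rfl
    · exact Or.inr (Or.inr (Or.inr (Or.inr ⟨ω, t, μ, G, hμω, hωN, hG, ht, rfl⟩)))
    refine Or.inr (Or.inr (Or.inr (Or.inl ⟨μ, t, G, hω, hωN, hG, ht, ?_⟩)))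
    rw [map_mul π ε (f ^ μ), span_pair_eq_span_singleton_of_mul_eq_zero]
    rw [← mul_assoc, ← map_mul, ← mul_assoc, ← sq, hε, zero_mul, map_zero, zero_mul]
  · have hgI : g ∈ I.comap π := by simp [π, I.zero_mem]
    rw [hI g hgI hg, Ideal.Quotient.mk_singleton_self, Ideal.span_insert_zero]
    rcases hμω.lt_or_eq with hμN | rfl
    · exact Or.inr (Or.inr (Or.inl ⟨μ, hμN, rfl⟩))
    refine Or.inl (Ideal.span_singleton_eq_bot.mpr ?_)
    rw [mul_eq_mul_of_map_eq hker hε ((map_pow ρ f μ).trans hg.symm), map_mul,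
      Ideal.Quotient.mk_singleton_self, mul_zero]

end Reduction

theorem stmt8_general {R : Type} [CommRing R] [Finite R]
    (p m s n : ℕ) (hp : p.Prime)
    (γ : R) (hγ2 : γ ^ 2 = 0)
    (hmax : ∀ a : R, a ∈ Ideal.span {γ} ↔ ¬ IsUnit a)
    (hres : Nat.card (R ⧸ Ideal.span {γ}) = p ^ m)
    (α₀ : R)
    (hirr : Irreducible ((X ^ n - C α₀ : R[X]).map (Ideal.Quotient.mk (Ideal.span {γ})))) :
    ∀ I : Ideal (R[X] ⧸ Ideal.span {(X ^ (n * p ^ s) - C (α₀ ^ p ^ s) : R[X])}),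
      I = ⊥ ∨ I = ⊤ ∨
      (∃ τ, τ < p ^ s ∧
        I = Ideal.span {Ideal.Quotient.mk
          (Ideal.span {(X ^ (n * p ^ s) - C (α₀ ^ p ^ s) : R[X])})
          (C γ * (X ^ n - C α₀) ^ τ)}) ∨
      (∃ ω t : ℕ, ∃ G : R[X] ⧸ Ideal.span {(X ^ (n * p ^ s) - C (α₀ ^ p ^ s) : R[X])},
        0 < ω ∧ ω < p ^ s ∧ (G = 0 ∨ IsUnit G) ∧ (G ≠ 0 → t < ω) ∧
        I = Ideal.span {Ideal.Quotient.mk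
            (Ideal.span {(X ^ (n * p ^ s) - C (α₀ ^ p ^ s) : R[X])})
            ((X ^ n - C α₀) ^ ω) +
          Ideal.Quotient.mk (Ideal.span {(X ^ (n * p ^ s) - C (α₀ ^ p ^ s) : R[X])})
            (C γ * (X ^ n - C α₀) ^ t) * G}) ∨
      (∃ ω t μ : ℕ, ∃ G : R[X] ⧸ Ideal.span {(X ^ (n * p ^ s) - C (α₀ ^ p ^ s) : R[X])},
        μ < ω ∧ ω < p ^ s ∧ (G = 0 ∨ IsUnit G) ∧ (G ≠ 0 → t < μ) ∧
        I = Ideal.span {Ideal.Quotient.mk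
            (Ideal.span {(X ^ (n * p ^ s) - C (α₀ ^ p ^ s) : R[X])})
            ((X ^ n - C α₀) ^ ω) +
          Ideal.Quotient.mk (Ideal.span {(X ^ (n * p ^ s) - C (α₀ ^ p ^ s) : R[X])})
            (C γ * (X ^ n - C α₀) ^ t) * G,
          Ideal.Quotient.mk (Ideal.span {(X ^ (n * p ^ s) - C (α₀ ^ p ^ s) : R[X])})
            (C γ * (X ^ n - C α₀) ^ μ)}) := by
  have : (Ideal.span {γ}).IsMaximal := Ideal.isMaximal_of_forall_mem_iff_not_isUnit hmax
  let := Ideal.Quotient.field (Ideal.span {γ})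
  have : Fact p.Prime := ⟨hp⟩
  have : Finite (R ⧸ Ideal.span {γ}) := Finite.of_surjective _ Ideal.Quotient.mk_surjective
  have := Fintype.ofFinite (R ⧸ Ideal.span {γ})
  have : CharP (R ⧸ Ideal.span {γ}) p :=
    charP_of_card_eq_prime_pow (by rw [← Nat.card_eq_fintype_card, hres])
  exact ideal_quotient_classification (ρ := mapRingHom (Ideal.Quotient.mk _))
    (map_surjective _ Ideal.Quotient.mk_surjective)
    (by rw [ker_mapRingHom, Ideal.mk_ker, Ideal.map_span, Set.image_singleton])
    (by rw [← C_pow, hγ2, C_0]) hirr (map_X_pow_mul_sub_C_pow _ n s α₀)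

/-- classification of the ideals of `K = R[x]/⟨x^{np^s} − α₀^{p^s}⟩`
(the `α₀^{p^s}`-constacyclic codes of length `np^s` over a finite chain ring with
nilpotency index 2), with `f = x^n − α₀` basic irreducible. -/
theorem stmt8 {R : Type} [CommRing R] [Finite R]
    (p m s n : ℕ) (hp : p.Prime) (hm : 0 < m) (hs : 0 < s) (hn : 0 < n)
    (hnp : Nat.gcd n p = 1)
    (γ : R) (hγ : γ ≠ 0) (hγ2 : γ ^ 2 = 0)
    (hmax : ∀ a : R, a ∈ Ideal.span {γ} ↔ ¬ IsUnit a)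
    (hres : Nat.card (R ⧸ Ideal.span {γ}) = p ^ m)
    (α₀ : R) (hα₀ : IsUnit α₀)
    (hirr : Irreducible ((X ^ n - C α₀ : R[X]).map (Ideal.Quotient.mk (Ideal.span {γ})))) :
    ∀ I : Ideal (R[X] ⧸ Ideal.span {(X ^ (n * p ^ s) - C (α₀ ^ p ^ s) : R[X])}),
      I = ⊥ ∨ I = ⊤ ∨
      (∃ τ, τ < p ^ s ∧
        I = Ideal.span {Ideal.Quotient.mk
          (Ideal.span {(X ^ (n * p ^ s) - C (α₀ ^ p ^ s) : R[X])})
          (C γ * (X ^ n - C α₀) ^ τ)}) ∨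
      (∃ ω t : ℕ, ∃ G : R[X] ⧸ Ideal.span {(X ^ (n * p ^ s) - C (α₀ ^ p ^ s) : R[X])},
        0 < ω ∧ ω < p ^ s ∧ (G = 0 ∨ IsUnit G) ∧ (G ≠ 0 → t < ω) ∧
        I = Ideal.span {Ideal.Quotient.mk
            (Ideal.span {(X ^ (n * p ^ s) - C (α₀ ^ p ^ s) : R[X])})
            ((X ^ n - C α₀) ^ ω) +
          Ideal.Quotient.mk (Ideal.span {(X ^ (n * p ^ s) - C (α₀ ^ p ^ s) : R[X])})
            (C γ * (X ^ n - C α₀) ^ t) * G}) ∨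
      (∃ ω t μ : ℕ, ∃ G : R[X] ⧸ Ideal.span {(X ^ (n * p ^ s) - C (α₀ ^ p ^ s) : R[X])},
        μ < ω ∧ ω < p ^ s ∧ (G = 0 ∨ IsUnit G) ∧ (G ≠ 0 → t < μ) ∧
        I = Ideal.span {Ideal.Quotient.mk
            (Ideal.span {(X ^ (n * p ^ s) - C (α₀ ^ p ^ s) : R[X])})
            ((X ^ n - C α₀) ^ ω) +
          Ideal.Quotient.mk (Ideal.span {(X ^ (n * p ^ s) - C (α₀ ^ p ^ s) : R[X])})
            (C γ * (X ^ n - C α₀) ^ t) * G,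
          Ideal.Quotient.mk (Ideal.span {(X ^ (n * p ^ s) - C (α₀ ^ p ^ s) : R[X])})
            (C γ * (X ^ n - C α₀) ^ μ)}) :=
  stmt8_general p m s n hp γ hγ2 hmax hres α₀ hirr
end

section
/- Suppose in addition that R has characteristic p. Let α₀ be a unit of R such that x^n − α₀ is basic irreducible over R, let α = α₀^{p^s}, write f = x^n − α₀, and let K = R[x]/⟨x^{np^s} − α⟩ (so that x^{np^s} − α = f^{p^s} in R[x]). Let I = ⟨f^ω + γ f^t G⟩ be an ideal of K with 0 < ω < p^s, G either 0 or a unit of K, and 0 ≤ t < ω when G ≠ 0. Let κ be the least nonnegative integer such that γ f^κ ∈ I. Then κ = ω if G = 0, and κ = min(ω, p^s − ω + t) if G ≠ 0. -/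
/-!
Write `f = X ^ n - C α₀` and `N = p ^ s`, so that `X ^ (n * N) - C (α₀ ^ N) = f ^ N` in
characteristic `p`. Since `γ² = 0`, `γ` kills the `γ f^t G` part of the generator, so
`γ f^ω ∈ I`; and if `G` is a unit, `γ f^(N-ω+t) = (f^ω + γ f^t G) f^(N-ω) G⁻¹` because `f^N = 0`
in `K`.

For the lower bound, lift a relation `γ f^k = (f^ω + γ f^t G) h + f^N g` to `R[X]` and reduce
modulo `γ`, i.e. pass to the domain `(R/γ)[X]` in which `f̄` is a nonzero nonunit. This first
gives `h = γ h₁ - f^(N-ω) g`; substituting back and using `γ² = 0` leaves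
`γ (f^k - f^ω h₁ + f^(N-ω+t) G g) = 0`. As the annihilator of `γ` is `⟨γ⟩`, reducing again gives
`f̄^k = f̄^ω h̄₁ - f̄^(N-ω+t) Ḡ ḡ`, which is impossible when `k < ω` and either `G ∈ ⟨f^N⟩` or
`k < N - ω + t`.
-/

open Polynomial Ideal

section QuotientBounds

variable {S : Type*} [CommRing S]

theorem mul_pow_mem_span_add {c : S} (hc : c * c = 0) (F G : S) (ω t : ℕ) :
    c * F ^ ω ∈ span {F ^ ω + c * F ^ t * G} :=
  mem_span_singleton'.2 ⟨c, by linear_combination F ^ t * G * hc⟩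

theorem mul_pow_mem_span_add_of_isUnit {c F G : S} {N ω : ℕ} (hF : F ^ N = 0) (hω : ω ≤ N)
    (hG : IsUnit G) (t : ℕ) :
    c * F ^ (N - ω + t) ∈ span {F ^ ω + c * F ^ t * G} := by
  obtain ⟨u, rfl⟩ := hG
  refine mem_span_singleton'.2 ⟨F ^ (N - ω) * ↑u⁻¹, ?_⟩
  have hsplit : F ^ ω * F ^ (N - ω) = F ^ N := by rw [← pow_add, Nat.add_sub_cancel' hω]
  linear_combination (↑u⁻¹ : S) * hsplit + (↑u⁻¹ : S) * hF + c * F ^ t * F ^ (N - ω) * u.inv_mul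

end QuotientBounds

section Reduction

variable {S D : Type*} [CommRing S] [CommRing D] [IsDomain D] (π : S →+* D) {c f : S}

theorem exists_map_pow_eq_of_mul_pow_eq (hker : ∀ a, π a = 0 ↔ c ∣ a)
    (hann : ∀ a, c * a = 0 → c ∣ a) (hc : c * c = 0) (hf : π f ≠ 0) {N ω t k : ℕ} (hω : ω ≤ N)
    {G h g : S} (E : c * f ^ k = (f ^ ω + c * f ^ t * G) * h + f ^ N * g) :
    ∃ a, π f ^ k = π f ^ ω * a - π f ^ (N - ω + t) * π G * π g := by
  have hπc : π c = 0 := (hker c).2 dvd_rfl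
  have hsplit : f ^ ω * f ^ (N - ω) = f ^ N := by rw [← pow_add, Nat.add_sub_cancel' hω]
  obtain ⟨h₁, hh₁⟩ : c ∣ h + f ^ (N - ω) * g := by
    rw [← hker]
    refine (mul_eq_zero.1 ?_).resolve_left (pow_ne_zero ω hf)
    have hE := congrArg π E
    have hsplit' := congrArg π hsplit
    simp only [map_mul, map_add, map_pow, hπc, zero_mul, add_zero] at hE hsplit' ⊢
    linear_combination π g * hsplit' - hE
  obtain ⟨a, ha⟩ : c ∣ f ^ k - f ^ ω * h₁ + f ^ (N - ω + t) * G * g := by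
    refine hann _ ?_
    linear_combination E + (f ^ ω + c * f ^ t * G) * hh₁ - g * hsplit + f ^ t * G * h₁ * hc
  refine ⟨π h₁, ?_⟩
  have ha' := congrArg π ha
  simp only [map_mul, map_add, map_sub, map_pow, hπc, zero_mul] at ha'
  linear_combination ha'

theorem mul_pow_ne_of_lt (hker : ∀ a, π a = 0 ↔ c ∣ a) (hann : ∀ a, c * a = 0 → c ∣ a)
    (hc : c * c = 0) (hf : π f ≠ 0) (hfu : ¬IsUnit (π f)) {N ω t k : ℕ} (hω : ω ≤ N)
    (hk : k < ω) {G : S} (hG : f ^ N ∣ G ∨ k < N - ω + t) (h g : S) :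
    c * f ^ k ≠ (f ^ ω + c * f ^ t * G) * h + f ^ N * g := by
  intro E
  obtain ⟨a, ha⟩ := exists_map_pow_eq_of_mul_pow_eq π hker hann hc hf hω E
  have hdvd : π f ^ (k + 1) ∣ π f ^ k := by
    rw [ha]
    refine dvd_sub (dvd_mul_of_dvd_left (pow_dvd_pow _ hk) _) (dvd_mul_of_dvd_left ?_ _)
    rcases hG with hGN | hlt
    · have hπGN : π f ^ N ∣ π G := by simpa only [map_pow] using map_dvd π hGN
      exact dvd_mul_of_dvd_right ((pow_dvd_pow _ (by omega)).trans hπGN) _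
    · exact dvd_mul_of_dvd_left (pow_dvd_pow _ hlt) _
  exact (k.lt_succ_self).not_ge ((pow_dvd_pow_iff hf hfu).1 hdvd)

theorem mk_mul_pow_notMem_span (hker : ∀ a, π a = 0 ↔ c ∣ a) (hann : ∀ a, c * a = 0 → c ∣ a)
    (hc : c * c = 0) (hf : π f ≠ 0) (hfu : ¬IsUnit (π f)) {N ω t k : ℕ} {J : Ideal S}
    (hJ : J ≤ span {f ^ N}) (hω : ω ≤ N) (hk : k < ω) {G : S ⧸ J}
    (hG : G = 0 ∨ k < N - ω + t) :
    Ideal.Quotient.mk J c * Ideal.Quotient.mk J f ^ k ∉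
      span {Ideal.Quotient.mk J f ^ ω + Ideal.Quotient.mk J c * Ideal.Quotient.mk J f ^ t * G} := by
  obtain ⟨G, rfl⟩ := Ideal.Quotient.mk_surjective G
  intro hmem
  obtain ⟨b, hb⟩ := mem_span_singleton'.1 hmem
  obtain ⟨h, rfl⟩ := Ideal.Quotient.mk_surjective b
  simp only [← map_pow, ← map_mul, ← map_add, Ideal.Quotient.mk_eq_mk_iff_sub_mem] at hb
  obtain ⟨g, hg⟩ := mem_span_singleton'.1 (hJ hb)
  refine mul_pow_ne_of_lt π hker hann hc hf hfu hω hk (G := G) (hG.imp_left fun hG0 => ?_) h (-g)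
    (by linear_combination hg)
  exact mem_span_singleton.1 (hJ (Ideal.Quotient.eq_zero_iff_mem.1 hG0))

end Reduction

theorem eq_of_isLeast_mul_pow_mem_span {S D : Type*} [CommRing S] [CommRing D] [IsDomain D]
    (π : S →+* D) {c f : S} (hker : ∀ a, π a = 0 ↔ c ∣ a) (hann : ∀ a, c * a = 0 → c ∣ a)
    (hc : c * c = 0) (hf : π f ≠ 0) (hfu : ¬IsUnit (π f)) {N ω t κ : ℕ} {J : Ideal S}
    (hfJ : f ^ N ∈ J) (hJ : J ≤ span {f ^ N}) (hω : ω ≤ N) {G : S ⧸ J} (hG : G = 0 ∨ IsUnit G)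
    (hκ : IsLeast {k : ℕ | Ideal.Quotient.mk J c * Ideal.Quotient.mk J f ^ k ∈
      span {Ideal.Quotient.mk J (f ^ ω) + Ideal.Quotient.mk J (c * f ^ t) * G}} κ) :
    (G = 0 → κ = ω) ∧ (G ≠ 0 → κ = min ω (N - ω + t)) := by
  simp only [map_mul, map_pow] at hκ
  have hc' : Ideal.Quotient.mk J c * Ideal.Quotient.mk J c = 0 := by rw [← map_mul, hc, map_zero]
  have hF : Ideal.Quotient.mk J f ^ N = 0 := by
    rw [← map_pow, Ideal.Quotient.eq_zero_iff_mem]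
    exact hfJ
  have hω_mem := mul_pow_mem_span_add hc' (Ideal.Quotient.mk J f) G ω t
  have hlower {k : ℕ} (hk : k < ω) (hG' : G = 0 ∨ k < N - ω + t) :=
    mk_mul_pow_notMem_span π hker hann hc hf hfu hJ hω hk hG'
  constructor
  · rintro rfl
    exact le_antisymm (hκ.2 hω_mem) (not_lt.1 fun hlt => hlower hlt (Or.inl rfl) hκ.1)
  · intro hG0
    have hunit_mem := mul_pow_mem_span_add_of_isUnit (c := Ideal.Quotient.mk J c) hF hω
      (hG.resolve_left hG0) t
    refine le_antisymm (le_min (hκ.2 hω_mem) (hκ.2 hunit_mem)) (not_lt.1 fun hlt => ?_)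
    rw [lt_min_iff] at hlt
    exact hlower hlt.1 (Or.inr hlt.2) hκ.1

section ChainRing

variable {R : Type*} [CommRing R]

theorem Ideal.isPrime_of_forall_mem_iff_not_isUnit_s9 {I : Ideal R}
    (h : ∀ a, a ∈ I ↔ ¬IsUnit a) : I.IsPrime where
  ne_top' := (I.ne_top_iff_one).2 fun h1 => (h 1).1 h1 isUnit_one
  mem_or_mem' {a b} hab := by
    simp only [h, IsUnit.mul_iff, not_and_or] at hab ⊢
    exact hab

theorem dvd_of_mul_eq_zero_of_forall_mem_span_iff {γ : R} (hγ : γ ≠ 0)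
    (h : ∀ a, a ∈ span {γ} ↔ ¬IsUnit a) {a : R} (ha : γ * a = 0) : γ ∣ a :=
  mem_span_singleton.1 ((h a).2 fun hu => hγ (hu.mul_left_eq_zero.1 ha))

theorem Polynomial.C_dvd_of_C_mul_eq_zero {γ : R} (h : ∀ a, γ * a = 0 → γ ∣ a) {H : R[X]}
    (hH : C γ * H = 0) : C γ ∣ H :=
  (C_dvd_iff_dvd_coeff _ _).2 fun i => h _ (by rw [← coeff_C_mul, hH, coeff_zero])

theorem Polynomial.mapRingHom_mk_span_singleton_eq_zero_iff (γ : R) (H : R[X]) :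
    mapRingHom (Ideal.Quotient.mk (span {γ})) H = 0 ↔ C γ ∣ H := by
  rw [← RingHom.mem_ker, ker_mapRingHom, mk_ker, map_span, Set.image_singleton,
    mem_span_singleton]

end ChainRing

theorem stmt9_general {R : Type} [CommRing R]
    (p s n : ℕ) (hp : p.Prime)
    (γ : R) (hγ : γ ≠ 0) (hγ2 : γ ^ 2 = 0)
    (hmax : ∀ a : R, a ∈ Ideal.span {γ} ↔ ¬ IsUnit a)
    (hchar : CharP R p)
    (α₀ : R)
    (hirr : Irreducible ((X ^ n - C α₀ : R[X]).map (Ideal.Quotient.mk (Ideal.span {γ}))))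
    (ω t : ℕ) (G : R[X] ⧸ Ideal.span {(X ^ (n * p ^ s) - C (α₀ ^ p ^ s) : R[X])})
    (hω' : ω < p ^ s) (hG : G = 0 ∨ IsUnit G)
    (κ : ℕ)
    (hκ : IsLeast {k : ℕ |
      Ideal.Quotient.mk (Ideal.span {(X ^ (n * p ^ s) - C (α₀ ^ p ^ s) : R[X])}) (C γ) *
        (Ideal.Quotient.mk (Ideal.span {(X ^ (n * p ^ s) - C (α₀ ^ p ^ s) : R[X])})
          (X ^ n - C α₀)) ^ k ∈
      Ideal.span {Ideal.Quotient.mk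
          (Ideal.span {(X ^ (n * p ^ s) - C (α₀ ^ p ^ s) : R[X])})
          ((X ^ n - C α₀) ^ ω) +
        Ideal.Quotient.mk (Ideal.span {(X ^ (n * p ^ s) - C (α₀ ^ p ^ s) : R[X])})
          (C γ * (X ^ n - C α₀) ^ t) * G}} κ) :
    (G = 0 → κ = ω) ∧ (G ≠ 0 → κ = min ω (p ^ s - ω + t)) := by
  have : Fact p.Prime := ⟨hp⟩
  have := isPrime_of_forall_mem_iff_not_isUnit_s9 hmax
  have hfrob : (X ^ (n * p ^ s) - C (α₀ ^ p ^ s) : R[X]) = (X ^ n - C α₀) ^ p ^ s := by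
    rw [sub_pow_char_pow, ← C_pow, ← pow_mul]
  have hγγ : (C γ : R[X]) * C γ = 0 := by rw [← C_mul, ← sq, hγ2, C_0]
  exact eq_of_isLeast_mul_pow_mem_span (mapRingHom (Ideal.Quotient.mk (span {γ})))
    (mapRingHom_mk_span_singleton_eq_zero_iff γ)
    (fun _ => C_dvd_of_C_mul_eq_zero fun _ => dvd_of_mul_eq_zero_of_forall_mem_span_iff hγ hmax)
    hγγ hirr.ne_zero hirr.not_isUnit (hfrob ▸ mem_span_singleton_self _) (by rw [hfrob])
    hω'.le hG hκ

/-- when `char R = p`, the least `κ` with `γ f^κ ∈ ⟨f^ω + γ f^t G⟩` in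
`K = R[x]/⟨x^{np^s} − α₀^{p^s}⟩` equals `ω` if `G = 0`, and `min(ω, p^s − ω + t)`
if `G ≠ 0`. -/
theorem stmt9 {R : Type} [CommRing R] [Finite R]
    (p m s n : ℕ) (hp : p.Prime) (hm : 0 < m) (hs : 0 < s) (hn : 0 < n)
    (hnp : Nat.gcd n p = 1)
    (γ : R) (hγ : γ ≠ 0) (hγ2 : γ ^ 2 = 0)
    (hmax : ∀ a : R, a ∈ Ideal.span {γ} ↔ ¬ IsUnit a)
    (hres : Nat.card (R ⧸ Ideal.span {γ}) = p ^ m)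
    (hchar : CharP R p)
    (α₀ : R) (hα₀ : IsUnit α₀)
    (hirr : Irreducible ((X ^ n - C α₀ : R[X]).map (Ideal.Quotient.mk (Ideal.span {γ}))))
    (ω t : ℕ) (G : R[X] ⧸ Ideal.span {(X ^ (n * p ^ s) - C (α₀ ^ p ^ s) : R[X])})
    (hω : 0 < ω) (hω' : ω < p ^ s) (hG : G = 0 ∨ IsUnit G) (ht : G ≠ 0 → t < ω)
    (κ : ℕ)
    (hκ : IsLeast {k : ℕ |
      Ideal.Quotient.mk (Ideal.span {(X ^ (n * p ^ s) - C (α₀ ^ p ^ s) : R[X])}) (C γ) *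
        (Ideal.Quotient.mk (Ideal.span {(X ^ (n * p ^ s) - C (α₀ ^ p ^ s) : R[X])})
          (X ^ n - C α₀)) ^ k ∈
      Ideal.span {Ideal.Quotient.mk
          (Ideal.span {(X ^ (n * p ^ s) - C (α₀ ^ p ^ s) : R[X])})
          ((X ^ n - C α₀) ^ ω) +
        Ideal.Quotient.mk (Ideal.span {(X ^ (n * p ^ s) - C (α₀ ^ p ^ s) : R[X])})
          (C γ * (X ^ n - C α₀) ^ t) * G}} κ) :
    (G = 0 → κ = ω) ∧ (G ≠ 0 → κ = min ω (p ^ s - ω + t)) :=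
  stmt9_general p s n hp γ hγ hγ2 hmax hchar α₀ hirr ω t G hω' hG κ hκ
end

section
/- Let α₀ be a unit of R such that x^n − α₀ is basic irreducible over R, let α = α₀^{p^s}, write f = x^n − α₀, and let K = R[x]/⟨x^{np^s} − α⟩. Then for every 0 ≤ τ < p^s, the annihilator in K of the ideal ⟨γ f^τ⟩ (the set of a ∈ K with a·c = 0 for all c ∈ ⟨γ f^τ⟩) equals the ideal ⟨f^{p^s − τ}, γ⟩ generated by f^{p^s − τ} and γ. -/
open Polynomial

/-- in `K = R[x]/⟨x^{np^s} − α₀^{p^s}⟩`, the annihilator of the ideal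
`⟨γ f^τ⟩` equals `⟨f^{p^s − τ}, γ⟩`, where `f = x^n − α₀`. -/
theorem stmt11 {R : Type} [CommRing R] [Finite R]
    (p m s n : ℕ) (hp : p.Prime) (hm : 0 < m) (hs : 0 < s) (hn : 0 < n)
    (hnp : Nat.gcd n p = 1)
    (γ : R) (hγ : γ ≠ 0) (hγ2 : γ ^ 2 = 0)
    (hmax : ∀ a : R, a ∈ Ideal.span {γ} ↔ ¬ IsUnit a)
    (hres : Nat.card (R ⧸ Ideal.span {γ}) = p ^ m)
    (α₀ : R) (hα₀ : IsUnit α₀)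
    (hirr : Irreducible ((X ^ n - C α₀ : R[X]).map (Ideal.Quotient.mk (Ideal.span {γ})))) :
    ∀ τ, τ < p ^ s →
      ∀ a : R[X] ⧸ Ideal.span {(X ^ (n * p ^ s) - C (α₀ ^ p ^ s) : R[X])},
        (∀ c ∈ Ideal.span {Ideal.Quotient.mk
            (Ideal.span {(X ^ (n * p ^ s) - C (α₀ ^ p ^ s) : R[X])})
            (C γ * (X ^ n - C α₀) ^ τ)}, a * c = 0) ↔
        a ∈ Ideal.span
          {Ideal.Quotient.mk (Ideal.span {(X ^ (n * p ^ s) - C (α₀ ^ p ^ s) : R[X])})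
            ((X ^ n - C α₀) ^ (p ^ s - τ)),
           Ideal.Quotient.mk (Ideal.span {(X ^ (n * p ^ s) - C (α₀ ^ p ^ s) : R[X])})
            (C γ)} := by
  classical
  set q : Ideal R := Ideal.span {γ} with hqdef
  set φ : R →+* R ⧸ q := Ideal.Quotient.mk q with hφdef
  have hqmax : q.IsMaximal := by
    rw [Ideal.isMaximal_iff]
    constructor
    · intro h1; exact (hmax 1).mp h1 isUnit_one
    · intro J x _ hx hxJ
      have hu : IsUnit x := by by_contra hcon; exact hx ((hmax x).mpr hcon)
      obtain ⟨u, rfl⟩ := hu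
      have : (↑u * ↑u⁻¹ : R) ∈ J := J.mul_mem_right _ hxJ
      simpa using this
  haveI := hqmax
  letI : Field (R ⧸ q) := Ideal.Quotient.field q
  haveI : Finite (R ⧸ q) := Finite.of_surjective φ Ideal.Quotient.mk_surjective
  letI : Fintype (R ⧸ q) := Fintype.ofFinite _
  haveI : Fact p.Prime := ⟨hp⟩
  haveI hchar : CharP (R ⧸ q) p := by
    obtain ⟨r, hr⟩ := CharP.exists (R ⧸ q)
    haveI := hr
    have hrp : r.Prime := CharP.char_is_prime (R ⧸ q) r
    obtain ⟨k, hk⟩ := FiniteField.card (R ⧸ q) r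
    have hcard : r ^ (k : ℕ) = p ^ m := by
      rw [← hk.2, ← hres, Nat.card_eq_fintype_card]
    have hrdvd : r ∣ p ^ m := hcard ▸ dvd_pow_self r k.pos.ne'
    have hreq : r = p := (Nat.prime_dvd_prime_iff_eq hrp hp).mp (hrp.dvd_of_dvd_pow hrdvd)
    exact hreq ▸ hr
  have hφγ : φ γ = 0 := by
    rw [Ideal.Quotient.eq_zero_iff_mem]; exact Ideal.subset_span rfl
  have hCdvd : ∀ P : R[X], P.map φ = 0 → ∃ Q, P = C γ * Q := by
    intro P hP
    refine (C_dvd_iff_dvd_coeff γ P).mpr fun i => ?_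
    have h1 : φ (P.coeff i) = 0 := by rw [← coeff_map, hP, coeff_zero]
    rw [Ideal.Quotient.eq_zero_iff_mem] at h1
    exact Ideal.mem_span_singleton.mp h1
  set f : R[X] := X ^ n - C α₀ with hfdef
  set h : R[X] := X ^ (n * p ^ s) - C (α₀ ^ p ^ s) with hhdef
  have hfbar : f.map φ = X ^ n - C (φ α₀) := by
    simp [hfdef, Polynomial.map_sub, Polynomial.map_pow]
  have hhbar : h.map φ = (f.map φ) ^ p ^ s := by
    rw [hhdef, Polynomial.map_sub, Polynomial.map_pow, Polynomial.map_X, Polynomial.map_C,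
      hfbar, sub_pow_char_pow, ← pow_mul, ← C_pow, ← map_pow]
  have hfb0 : f.map φ ≠ 0 := hirr.ne_zero
  obtain ⟨g, hg⟩ : ∃ g, f ^ p ^ s - h = C γ * g := by
    refine hCdvd _ ?_
    rw [Polynomial.map_sub, Polynomial.map_pow, hhbar]; ring
  have hγγ : (C γ : R[X]) * C γ = 0 := by
    rw [← C_mul, ← sq, hγ2, map_zero]
  intro τ hτ
  set I : Ideal R[X] := Ideal.span {h} with hIdef
  set ψ : R[X] →+* R[X] ⧸ I := Ideal.Quotient.mk I with hψdef
  have hps : f ^ (p ^ s - τ) * f ^ τ = f ^ p ^ s := by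
    rw [← pow_add, Nat.sub_add_cancel hτ.le]
  have hz1 : ψ (f ^ (p ^ s - τ)) * ψ (C γ * f ^ τ) = 0 := by
    rw [← map_mul, Ideal.Quotient.eq_zero_iff_mem, hIdef, Ideal.mem_span_singleton]
    exact ⟨C γ, by linear_combination C γ * hps + C γ * hg + g * hγγ⟩
  have hz2 : ψ (C γ) * ψ (C γ * f ^ τ) = 0 := by
    rw [← map_mul]
    have : (C γ : R[X]) * (C γ * f ^ τ) = 0 := by rw [← mul_assoc, hγγ, zero_mul]
    rw [this, map_zero]
  intro a
  constructor
  · -- annihilates → in span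
    intro ha
    obtain ⟨A, hA⟩ := Ideal.Quotient.mk_surjective a
    have h0 : ψ A * ψ (C γ * f ^ τ) = 0 := by
      rw [hψdef, hA]; exact ha _ (Ideal.subset_span rfl)
    rw [← map_mul, Ideal.Quotient.eq_zero_iff_mem, hIdef, Ideal.mem_span_singleton] at h0
    obtain ⟨B, hB⟩ := h0
    -- reduce mod γ : h̄ * B̄ = 0, so B̄ = 0
    have hBmap : (h.map φ) * (B.map φ) = 0 := by
      rw [← Polynomial.map_mul, ← hB]
      simp [Polynomial.map_mul, Polynomial.map_pow, hφγ]
    have hB0 : B.map φ = 0 := by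
      rcases mul_eq_zero.mp hBmap with hc | hc
      · exact absurd hc (by rw [hhbar]; exact pow_ne_zero _ hfb0)
      · exact hc
    obtain ⟨B₁, rfl⟩ := hCdvd B hB0
    -- coefficients of A f^τ - h B₁ are killed by γ, hence in ⟨γ⟩
    have hcoeff : ∀ i, γ * (A * f ^ τ - h * B₁).coeff i = 0 := by
      intro i
      have hCz : C γ * (A * f ^ τ - h * B₁) = 0 := by linear_combination hB
      have := congrArg (fun P : R[X] => P.coeff i) hCz
      simpa [coeff_C_mul] using this
    have hann : ∀ c : R, γ * c = 0 → γ ∣ c := by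
      intro c hc
      by_cases hu : IsUnit c
      · exfalso
        obtain ⟨u, rfl⟩ := hu
        apply hγ
        have : γ * ↑u * ↑u⁻¹ = 0 := by rw [hc, zero_mul]
        simpa [mul_assoc] using this
      · exact Ideal.mem_span_singleton.mp ((hmax c).mpr hu)
    obtain ⟨D, hD⟩ : ∃ D, A * f ^ τ - h * B₁ = C γ * D :=
      (C_dvd_iff_dvd_coeff γ _).mpr fun i => hann _ (hcoeff i)
    -- reduce mod γ : Ā f̄^τ = f̄^{p^s} B̄₁
    have hAbar : (A.map φ) * (f.map φ) ^ τ = (f.map φ) ^ p ^ s * (B₁.map φ) := by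
      have := congrArg (Polynomial.map φ) hD
      simpa [Polynomial.map_mul, Polynomial.map_sub, Polynomial.map_pow, hhbar, hφγ,
        sub_eq_zero] using this
    have hsplit : (f.map φ) ^ p ^ s = (f.map φ) ^ (p ^ s - τ) * (f.map φ) ^ τ := by
      rw [← pow_add, Nat.sub_add_cancel hτ.le]
    have hAeq : A.map φ = (f.map φ) ^ (p ^ s - τ) * (B₁.map φ) := by
      have hcan : (A.map φ) * (f.map φ) ^ τ =
          ((f.map φ) ^ (p ^ s - τ) * (B₁.map φ)) * (f.map φ) ^ τ := by
        rw [hAbar, hsplit]; ring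
      exact mul_right_cancel₀ (pow_ne_zero _ hfb0) hcan
    obtain ⟨E, hE⟩ : ∃ E, A - f ^ (p ^ s - τ) * B₁ = C γ * E := by
      refine hCdvd _ ?_
      simp only [Polynomial.map_sub, Polynomial.map_mul, Polynomial.map_pow, hAeq]
      ring
    rw [← hA, Ideal.mem_span_pair]
    refine ⟨ψ B₁, ψ E, ?_⟩
    rw [mul_comm (ψ B₁), mul_comm (ψ E), ← map_mul, ← map_mul, ← map_add]
    congr 1
    linear_combination -hE
  · -- in span → annihilates
    intro ha c hc
    rw [Ideal.mem_span_pair] at ha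
    obtain ⟨u, v, rfl⟩ := ha
    rw [Ideal.mem_span_singleton] at hc
    obtain ⟨d, rfl⟩ := hc
    calc (u * ψ (f ^ (p ^ s - τ)) + v * ψ (C γ)) * (ψ (C γ * f ^ τ) * d)
        = u * d * (ψ (f ^ (p ^ s - τ)) * ψ (C γ * f ^ τ))
          + v * d * (ψ (C γ) * ψ (C γ * f ^ τ)) := by ring
      _ = 0 := by rw [hz1, hz2]; ring
end
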